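/- arXiv:2401.01616 — 8 statements merged into one kernel-verified Lean document; each statement's English description precedes it below -/
import Mathlib

section
/- (Johnson's minimal transformation to orthonormality) Let X be a real invertible n×n matrix with singular value decomposition X = U Σ Vᵀ, where U and V are orthogonal and Σ is diagonal with positive diagonal entries. Then the orthogonal n×n matrix Z minimizing Tr((X − Z)ᵀ(X − Z)) subject to ZᵀZ = 1 exists, is unique, and is given by Z = U Vᵀ. -/
open Matrix

private lemma key_lemma {n : ℕ} (d : Fin n → ℝ) (W : Matrix (Fin n) (Fin n) ℝ)
    (hW : Wᵀ * W = 1) (hd : ∀ i, 0 < d i) :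
    (Wᵀ * Matrix.diagonal d).trace ≤ ∑ i, d i ∧
    ((Wᵀ * Matrix.diagonal d).trace = ∑ i, d i → W = 1) := by
  have hcol : ∀ i, ∑ j, W j i * W j i = 1 := by
    intro i
    have := congrFun (congrFun hW i) i
    simpa [Matrix.mul_apply, Matrix.one_apply] using this
  have htr : (Wᵀ * Matrix.diagonal d).trace = ∑ i, W i i * d i := by
    simp [Matrix.trace, Matrix.diag, Matrix.mul_apply, Matrix.diagonal_apply,
      Finset.mul_sum]
  have hdiag_le : ∀ i, W i i ≤ 1 := by
    intro i
    have h1 : W i i * W i i ≤ ∑ j, W j i * W j i := by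
      apply Finset.single_le_sum (f := fun j => W j i * W j i)
      · intro j _; exact mul_self_nonneg _
      · exact Finset.mem_univ i
    rw [hcol i] at h1
    nlinarith [mul_self_nonneg (W i i - 1)]
  have hterm : ∀ i ∈ Finset.univ, W i i * d i ≤ d i := by
    intro i _
    calc W i i * d i ≤ 1 * d i := by
          exact mul_le_mul_of_nonneg_right (hdiag_le i) (hd i).le
      _ = d i := one_mul _
  constructor
  · rw [htr]; exact Finset.sum_le_sum hterm
  · intro heq
    rw [htr] at heq
    have := (Finset.sum_eq_sum_iff_of_le hterm).mp heq
    have hdiag : ∀ i, W i i = 1 := by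
      intro i
      have h := (this i (Finset.mem_univ i)).symm
      have := hd i
      field_simp at h
      nlinarith [hd i]
    ext i j
    by_cases hij : i = j
    · subst hij; simp [hdiag i]
    · have h1 := hcol j
      have hz : ∀ k ∈ Finset.univ \ {j}, W k j * W k j = 0 := by
        have hsum : ∑ k ∈ Finset.univ \ {j}, W k j * W k j = 0 := by
          have := Finset.sum_eq_sum_sdiff_singleton_add (Finset.mem_univ j)
            (fun k => W k j * W k j)
          rw [h1] at *
          have hjj : W j j * W j j = 1 := by rw [hdiag j]; ring
          linarith [this, hjj]
        intro k hk
        have hnn : ∀ k ∈ Finset.univ \ {j}, 0 ≤ W k j * W k j := fun k _ => mul_self_nonneg _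
        exact (Finset.sum_eq_zero_iff_of_nonneg hnn).mp hsum k hk
      have : W i j * W i j = 0 := hz i (by simp [hij])
      have : W i j = 0 := by nlinarith
      simp [this, Matrix.one_apply, hij]

/-- **Johnson's minimal transformation to orthonormality.**
For a real invertible `n×n` matrix `X` with singular value decomposition `X = U Σ Vᵀ`
(`U`, `V` orthogonal and `Σ = diagonal d` with positive entries), the orthogonal matrix
`Z` minimizing `Tr((X − Z)ᵀ(X − Z))` subject to `ZᵀZ = 1` exists, is unique, and is
given by `Z = U Vᵀ`. -/
theorem johnson_minimal_transformation_to_orthonormality {n : ℕ}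
    (X U V : Matrix (Fin n) (Fin n) ℝ) (d : Fin n → ℝ)
    (hX : IsUnit X.det)
    (hU : Uᵀ * U = 1) (hV : Vᵀ * V = 1)
    (hd : ∀ i, 0 < d i)
    (hSVD : X = U * Matrix.diagonal d * Vᵀ) :
    ((U * Vᵀ)ᵀ * (U * Vᵀ) = 1) ∧
    (∀ Z : Matrix (Fin n) (Fin n) ℝ, Zᵀ * Z = 1 →
      ((X - U * Vᵀ)ᵀ * (X - U * Vᵀ)).trace ≤ ((X - Z)ᵀ * (X - Z)).trace) ∧
    (∀ Z : Matrix (Fin n) (Fin n) ℝ, Zᵀ * Z = 1 →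
      ((X - Z)ᵀ * (X - Z)).trace = ((X - U * Vᵀ)ᵀ * (X - U * Vᵀ)).trace →
      Z = U * Vᵀ) := by
  have hUU : U * Uᵀ = 1 := mul_eq_one_comm.mp hU
  have hVV : V * Vᵀ = 1 := mul_eq_one_comm.mp hV
  -- part 1
  have horth : (U * Vᵀ)ᵀ * (U * Vᵀ) = 1 := by
    rw [transpose_mul, transpose_transpose, Matrix.mul_assoc, ← Matrix.mul_assoc Uᵀ, hU,
      Matrix.one_mul, hVV]
  -- trace expansion
  have expand : ∀ Z : Matrix (Fin n) (Fin n) ℝ, Zᵀ * Z = 1 →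
      ((X - Z)ᵀ * (X - Z)).trace = (Xᵀ * X).trace + n - 2 * (Zᵀ * X).trace := by
    intro Z hZ
    have hmat : (X - Z)ᵀ * (X - Z) = Xᵀ * X - Xᵀ * Z - Zᵀ * X + Zᵀ * Z := by
      rw [transpose_sub]; noncomm_ring
    have hXZ : (Xᵀ * Z).trace = (Zᵀ * X).trace := by
      rw [← Matrix.trace_transpose (Xᵀ * Z), transpose_mul, transpose_transpose]
    rw [hmat, hZ, Matrix.trace_add, Matrix.trace_sub, Matrix.trace_sub, Matrix.trace_one,
      hXZ, Fintype.card_fin]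
    ring
  -- trace of ZᵀX via W = UᵀZV
  have htrW : ∀ Z : Matrix (Fin n) (Fin n) ℝ,
      (Zᵀ * X).trace = ((Uᵀ * Z * V)ᵀ * Matrix.diagonal d).trace := by
    intro Z
    rw [hSVD]
    rw [show Zᵀ * (U * Matrix.diagonal d * Vᵀ) = (Zᵀ * U * Matrix.diagonal d) * Vᵀ by
      noncomm_ring]
    rw [Matrix.trace_mul_comm]
    congr 1
    rw [transpose_mul, transpose_mul, transpose_transpose]
    noncomm_ring
  have hWorth : ∀ Z : Matrix (Fin n) (Fin n) ℝ, Zᵀ * Z = 1 →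
      (Uᵀ * Z * V)ᵀ * (Uᵀ * Z * V) = 1 := by
    intro Z hZ
    rw [transpose_mul, transpose_mul, transpose_transpose]
    calc Vᵀ * (Zᵀ * U) * (Uᵀ * Z * V)
        = Vᵀ * (Zᵀ * ((U * Uᵀ) * Z)) * V := by noncomm_ring
      _ = 1 := by rw [hUU, Matrix.one_mul, hZ, Matrix.mul_one, hV]
  -- value at Z₀ = U Vᵀ
  have hW0 : Uᵀ * (U * Vᵀ) * V = 1 := by
    rw [← Matrix.mul_assoc, hU, Matrix.one_mul, mul_eq_one_comm.mpr hVV]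
  have htr0 : ((U * Vᵀ)ᵀ * X).trace = ∑ i, d i := by
    rw [htrW, hW0, transpose_one, Matrix.one_mul, Matrix.trace_diagonal]
  refine ⟨horth, ?_, ?_⟩
  · intro Z hZ
    have hle := (key_lemma d (Uᵀ * Z * V) (hWorth Z hZ) hd).1
    rw [expand Z hZ, expand (U * Vᵀ) horth, htr0, htrW Z]
    linarith
  · intro Z hZ heq
    rw [expand Z hZ, expand (U * Vᵀ) horth, htr0, htrW Z] at heq
    have hWeq : ((Uᵀ * Z * V)ᵀ * Matrix.diagonal d).trace = ∑ i, d i := by linarith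
    have hW1 : Uᵀ * Z * V = 1 := (key_lemma d _ (hWorth Z hZ) hd).2 hWeq
    calc Z = (U * Uᵀ) * Z * (V * Vᵀ) := by rw [hUU, hVV, Matrix.one_mul, Matrix.mul_one]
      _ = U * (Uᵀ * Z * V) * Vᵀ := by noncomm_ring
      _ = U * Vᵀ := by rw [hW1, Matrix.mul_one]
end

section
/- Let A be a real invertible N×N matrix whose columns all have Euclidean norm 1, with singular value decomposition A = U Σ Vᵀ, and let B = U Vᵀ. Then the probability matrix P = (BᵀA)∘(BᵀA) (entrywise square of BᵀA) is symmetric and doubly stochastic: all its entries are nonnegative and every row sum and every column sum equals 1. -/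
open Matrix

/-- For a real invertible `N×N` matrix `A` whose columns all have Euclidean norm 1,
with SVD `A = U Σ Vᵀ` and `B = U Vᵀ`, the probability matrix
`P = (BᵀA)∘(BᵀA)` (entrywise square of `BᵀA`) is symmetric and doubly stochastic:
all entries are nonnegative and every row sum and every column sum equals 1. -/
theorem probMatrix_symm_doublyStochastic {N : ℕ}
    (A U V : Matrix (Fin N) (Fin N) ℝ) (d : Fin N → ℝ)
    (hA : IsUnit A.det)
    (hcols : ∀ i, ∑ j, (A j i) ^ 2 = 1)
    (hU : Uᵀ * U = 1) (hV : Vᵀ * V = 1)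
    (hd : ∀ i, 0 < d i)
    (hSVD : A = U * Matrix.diagonal d * Vᵀ) :
    (Matrix.hadamard ((U * Vᵀ)ᵀ * A) ((U * Vᵀ)ᵀ * A)).IsSymm ∧
    (∀ μ i, 0 ≤ Matrix.hadamard ((U * Vᵀ)ᵀ * A) ((U * Vᵀ)ᵀ * A) μ i) ∧
    (∀ μ, ∑ i, Matrix.hadamard ((U * Vᵀ)ᵀ * A) ((U * Vᵀ)ᵀ * A) μ i = 1) ∧
    (∀ i, ∑ μ, Matrix.hadamard ((U * Vᵀ)ᵀ * A) ((U * Vᵀ)ᵀ * A) μ i = 1) := by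
  set M := (U * Vᵀ)ᵀ * A with hMdef
  have hM : M = V * Matrix.diagonal d * Vᵀ := by
    rw [hMdef, hSVD, transpose_mul, transpose_transpose]
    calc V * Uᵀ * (U * Matrix.diagonal d * Vᵀ)
        = V * (Uᵀ * U) * Matrix.diagonal d * Vᵀ := by
          simp only [Matrix.mul_assoc]
      _ = V * Matrix.diagonal d * Vᵀ := by rw [hU]; simp [Matrix.mul_assoc]
  have hMsymm : Mᵀ = M := by
    rw [hM, transpose_mul, transpose_mul, transpose_transpose,
      Matrix.diagonal_transpose, Matrix.mul_assoc]
  have gen : ∀ W : Matrix (Fin N) (Fin N) ℝ, Wᵀ * W = 1 →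
      (W * Matrix.diagonal d * Vᵀ)ᵀ * (W * Matrix.diagonal d * Vᵀ)
      = V * (Matrix.diagonal d * (Matrix.diagonal d * Vᵀ)) := by
    intro W hW
    simp only [transpose_mul, transpose_transpose, Matrix.diagonal_transpose,
      Matrix.mul_assoc]
    rw [← Matrix.mul_assoc Wᵀ W, hW, Matrix.one_mul]
  have hMtM : Mᵀ * M = Aᵀ * A := by
    rw [hM, hSVD, gen V hV, gen U hU]
  have hdiag : ∀ i, (Mᵀ * M) i i = 1 := by
    intro i
    rw [hMtM]
    simp only [Matrix.mul_apply, transpose_apply]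
    simpa [pow_two] using hcols i
  refine ⟨?_, ?_, ?_, ?_⟩
  · unfold Matrix.IsSymm
    ext i j
    simp only [transpose_apply, Matrix.hadamard_apply]
    rw [show M j i = Mᵀ i j from rfl, hMsymm]
  · intro μ i
    simpa [Matrix.hadamard] using mul_self_nonneg (M μ i)
  · intro μ
    have := hdiag μ
    rw [← hMsymm] at this
    simp only [Matrix.mul_apply, transpose_apply] at this
    simpa [Matrix.hadamard] using this
  · intro i
    have := hdiag i
    simp only [Matrix.mul_apply, transpose_apply] at this
    simpa [Matrix.hadamard] using this
end

section
/- (Sinkhorn's theorem) Let X be an n×n real matrix all of whose entries are strictly positive. Then there exists a doubly stochastic matrix T_X of the form T_X = D₁ X D₂, where D₁ and D₂ are diagonal matrices with strictly positive diagonal entries; T_X is unique, and D₁ and D₂ are unique up to multiplying D₁ by a positive scalar c and D₂ by 1/c. -/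
open Matrix

/-- An `n×n` real matrix is doubly stochastic if its entries are nonnegative and all
row sums and column sums equal 1. -/
def IsDoublyStochastic {n : ℕ} (M : Matrix (Fin n) (Fin n) ℝ) : Prop :=
  (∀ i j, 0 ≤ M i j) ∧ (∀ i, ∑ j, M i j = 1) ∧ (∀ j, ∑ i, M i j = 1)

section SinkhornAux
open Finset Real


set_option maxHeartbeats 1000000 in
lemma sinkhorn_bound {n : ℕ} (hn : 0 < n) (X : Matrix (Fin n) (Fin n) ℝ)
    (m : ℝ) (hm : 0 < m) (hmX : ∀ i j, m ≤ X i j) (C : ℝ) (hC : 0 < C)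
    (u v : Fin n → ℝ) (hu : ∑ i, u i = 0)
    (hφ : (∑ i, ∑ j, X i j * Real.exp (u i + v j)) - ∑ i, u i - ∑ j, v j ≤ C) :
    ∀ i, |u i| ≤ (n+1) * (max 1 ((4*C+4*n+4)/m) + C + 1) ∧
         |v i| ≤ (n+1) * (max 1 ((4*C+4*n+4)/m) + C + 1) := by
  haveI : Nonempty (Fin n) := ⟨⟨0, hn⟩⟩
  have hn1 : (1:ℝ) ≤ n := by exact_mod_cast hn
  set R : ℝ := max 1 ((4*C+4*n+4)/m) with hR
  have hR1 : (1:ℝ) ≤ R := le_max_left _ _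
  have hRpos : 0 < R := lt_of_lt_of_le one_pos hR1
  obtain ⟨i₀, -, hi₀⟩ := Finset.exists_max_image Finset.univ u Finset.univ_nonempty
  obtain ⟨j₀, -, hj₀⟩ := Finset.exists_max_image Finset.univ v Finset.univ_nonempty
  set s := u i₀ with hs
  set t := v j₀ with ht
  have hsum_le : ∀ (w : Fin n → ℝ) (a : ℝ), (∀ k, w k ≤ a) → ∑ k, w k ≤ n * a := by
    intro w a hw
    calc ∑ k, w k ≤ ∑ _k : Fin n, a := Finset.sum_le_sum fun k _ => hw k
    _ = n * a := by simp [Finset.sum_const, Finset.card_univ]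
  have hns : (0:ℝ) ≤ n * s := by
    have h2 := hsum_le u s (fun k => hi₀ k (Finset.mem_univ k))
    rw [hu] at h2; linarith
  have hs0 : 0 ≤ s := by
    by_contra h
    push_neg at h
    nlinarith
  -- P := double sum, positivity of all terms
  have hterm : ∀ i j, 0 < X i j * Real.exp (u i + v j) := fun i j =>
    mul_pos (lt_of_lt_of_le hm (hmX i j)) (Real.exp_pos _)
  set P := ∑ i, ∑ j, X i j * Real.exp (u i + v j) with hP
  have hPpos : 0 < P := Finset.sum_pos (fun i _ => Finset.sum_pos (fun j _ => hterm i j) Finset.univ_nonempty) Finset.univ_nonempty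
  set σ := ∑ j, v j with hσ
  have hφ' : P - σ ≤ C := by rw [hP, hσ] at *; linarith [hφ, hu]
  have hσlb : -C ≤ σ := by linarith
  have hσub : σ ≤ n * t := hsum_le v t (fun k => hj₀ k (Finset.mem_univ k))
  -- one term lower bound for P
  have honeterm : m * Real.exp (s + t) ≤ P := by
    have h1 : m * Real.exp (s + t) ≤ X i₀ j₀ * Real.exp (u i₀ + v j₀) := by
      apply mul_le_mul (hmX i₀ j₀) (le_of_eq rfl) (le_of_lt (Real.exp_pos _)) (le_of_lt (lt_of_lt_of_le hm (hmX i₀ j₀)))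
    calc m * Real.exp (s + t) ≤ X i₀ j₀ * Real.exp (u i₀ + v j₀) := h1
    _ ≤ ∑ j, X i₀ j * Real.exp (u i₀ + v j) :=
        Finset.single_le_sum (fun j _ => le_of_lt (hterm i₀ j)) (Finset.mem_univ j₀)
    _ ≤ P := Finset.single_le_sum (fun i _ => Finset.sum_nonneg fun j _ => le_of_lt (hterm i j)) (Finset.mem_univ i₀)
  have hkey : m * Real.exp (s + t) ≤ C + n * (s + t) := by nlinarith
  -- r := s + t ≤ R
  have hrR : s + t ≤ R := by
    by_contra h
    push_neg at h
    have h1 : 1 < s + t := lt_of_le_of_lt hR1 h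
    have h2 : (4*C+4*n+4)/m < s + t := lt_of_le_of_lt (le_max_right _ _) h
    have h3 : 4*C+4*n+4 < m * (s+t) := by
      rw [div_lt_iff₀ hm] at h2; linarith [h2]
    have h4 : 1 + (s+t)/2 ≤ Real.exp ((s+t)/2) := by linarith [Real.add_one_le_exp ((s+t)/2)]
    have h5 : Real.exp (s+t) = Real.exp ((s+t)/2) * Real.exp ((s+t)/2) := by
      rw [← Real.exp_add]; ring_nf
    have h7 : (1 + (s+t)/2)^2 ≤ Real.exp (s+t) := by
      rw [h5, sq]
      exact mul_le_mul h4 h4 (by linarith) (Real.exp_pos _).le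
    nlinarith [hkey, h7, h1, h3, hm.le, hC.le, hn1]
  -- bounds
  have htub : t ≤ R := by linarith
  have htlb : -C ≤ t := by
    have : σ ≤ n * t := hσub
    nlinarith
  have hsub : s ≤ R + C := by linarith
  have hRC0 : (0:ℝ) ≤ R + C := by linarith
  have hBig : (n:ℝ)*(R+C) + C ≤ (n+1)*(R+C+1) := by nlinarith
  have hmono : R + C ≤ (n:ℝ)*(R+C) := by nlinarith
  have hnR : (n:ℝ)*R ≤ (n:ℝ)*(R+C) := by nlinarith
  -- |u i| and |v j|
  intro i
  constructor
  · rw [abs_le]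
    constructor
    · -- u i = -∑_{k≠i} u k ≥ -(n-1)s
      have hsplit : u i + ∑ k ∈ Finset.univ.erase i, u k = 0 := by
        rw [← hu]; exact (Finset.add_sum_erase Finset.univ u (Finset.mem_univ i)).symm ▸ rfl
      have hcard : (Finset.univ.erase i).card = n - 1 := by
        rw [Finset.card_erase_of_mem (Finset.mem_univ i), Finset.card_univ, Fintype.card_fin]
      have hbd : ∑ k ∈ Finset.univ.erase i, u k ≤ (n:ℝ) * (R + C) := by
        calc ∑ k ∈ Finset.univ.erase i, u k ≤ ∑ _k ∈ Finset.univ.erase i, (R+C) :=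
          Finset.sum_le_sum fun k _ => le_trans (hi₀ k (Finset.mem_univ k)) hsub
        _ = ((n:ℝ) - 1) * (R+C) := by
            rw [Finset.sum_const, hcard, nsmul_eq_mul, Nat.cast_sub hn]; simp
        _ ≤ (n:ℝ) * (R+C) := by nlinarith
      linarith
    · linarith [hi₀ i (Finset.mem_univ i)]
  · rw [abs_le]
    constructor
    · have hsplit : v i + ∑ k ∈ Finset.univ.erase i, v k = σ := by
        rw [hσ]; exact (Finset.add_sum_erase Finset.univ v (Finset.mem_univ i)).symm ▸ rfl
      have hcard : (Finset.univ.erase i).card = n - 1 := by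
        rw [Finset.card_erase_of_mem (Finset.mem_univ i), Finset.card_univ, Fintype.card_fin]
      have hbd : ∑ k ∈ Finset.univ.erase i, v k ≤ (n:ℝ) * R := by
        calc ∑ k ∈ Finset.univ.erase i, v k ≤ ∑ _k ∈ Finset.univ.erase i, R :=
          Finset.sum_le_sum fun k _ => le_trans (hj₀ k (Finset.mem_univ k)) htub
        _ = ((n:ℝ) - 1) * R := by
            rw [Finset.sum_const, hcard, nsmul_eq_mul, Nat.cast_sub hn]; simp
        _ ≤ (n:ℝ) * R := by nlinarith
      linarith
    · linarith [hj₀ i (Finset.mem_univ i)]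


variable {n : ℕ}

noncomputable def sinkhornPhi (X : Matrix (Fin n) (Fin n) ℝ) :
    ((Fin n → ℝ) × (Fin n → ℝ)) → ℝ :=
  fun p => (∑ i, ∑ j, X i j * Real.exp (p.1 i + p.2 j)) - ∑ i, p.1 i - ∑ j, p.2 j

lemma sinkhornPhi_continuous (X : Matrix (Fin n) (Fin n) ℝ) :
    Continuous (sinkhornPhi X) := by
  unfold sinkhornPhi
  fun_prop

lemma sinkhornPhi_shift (X : Matrix (Fin n) (Fin n) ℝ) (u v : Fin n → ℝ) (c : ℝ) :
    sinkhornPhi X (fun i => u i - c, fun j => v j + c) = sinkhornPhi X (u, v) := by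
  unfold sinkhornPhi
  simp only [Finset.sum_sub_distrib, Finset.sum_add_distrib, Finset.sum_const,
    Finset.card_univ, Fintype.card_fin, nsmul_eq_mul]
  have : ∀ i j : Fin n, X i j * Real.exp (u i - c + (v j + c)) = X i j * Real.exp (u i + v j) := by
    intro i j; congr 1; ring_nf
  rw [Finset.sum_congr rfl fun i _ => Finset.sum_congr rfl fun j _ => this i j]
  ring

-- row-sum update identity
lemma sinkhornPhi_update_fst (X : Matrix (Fin n) (Fin n) ℝ) (u v : Fin n → ℝ)
    (i : Fin n) (t : ℝ) :
    sinkhornPhi X (Function.update u i (u i + t), v)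
      = sinkhornPhi X (u, v)
        + (∑ j, X i j * Real.exp (u i + v j)) * (Real.exp t - 1) - t := by
  classical
  unfold sinkhornPhi
  set S := ∑ j, X i j * Real.exp (u i + v j) with hS
  have hmem := Finset.mem_univ i
  have e1 : ∑ i', ∑ j, X i' j * Real.exp (Function.update u i (u i + t) i' + v j)
      = Real.exp t * S + ∑ i' ∈ Finset.univ.erase i, ∑ j, X i' j * Real.exp (u i' + v j) := by
    rw [← Finset.add_sum_erase Finset.univ _ hmem]
    congr 1
    · rw [Function.update_self, hS, Finset.mul_sum]
      refine Finset.sum_congr rfl fun j _ => ?_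
      rw [show u i + t + v j = t + (u i + v j) by ring, Real.exp_add]; ring
    · refine Finset.sum_congr rfl fun k hk => ?_
      rw [Function.update_of_ne (Finset.ne_of_mem_erase hk)]
  have e2 : ∑ i', ∑ j, X i' j * Real.exp (u i' + v j)
      = S + ∑ i' ∈ Finset.univ.erase i, ∑ j, X i' j * Real.exp (u i' + v j) := by
    rw [← Finset.add_sum_erase Finset.univ _ hmem]
  have e3 : ∑ i', Function.update u i (u i + t) i' = t + ∑ i', u i' := by
    rw [Finset.sum_update_of_mem hmem, ← Finset.add_sum_erase Finset.univ u hmem,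
      Finset.erase_eq]
    ring
  rw [e1, e3]
  rw [e2]
  ring

-- column-sum update identity
lemma sinkhornPhi_update_snd (X : Matrix (Fin n) (Fin n) ℝ) (u v : Fin n → ℝ)
    (j : Fin n) (t : ℝ) :
    sinkhornPhi X (u, Function.update v j (v j + t))
      = sinkhornPhi X (u, v)
        + (∑ i, X i j * Real.exp (u i + v j)) * (Real.exp t - 1) - t := by
  classical
  unfold sinkhornPhi
  set S := ∑ i, X i j * Real.exp (u i + v j) with hS
  have hmem := Finset.mem_univ j
  rw [Finset.sum_comm (f := fun i' j' => X i' j' * Real.exp (u i' + Function.update v j (v j + t) j')),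
    Finset.sum_comm (f := fun i' j' => X i' j' * Real.exp (u i' + v j'))]
  have e1 : ∑ j', ∑ i, X i j' * Real.exp (u i + Function.update v j (v j + t) j')
      = Real.exp t * S + ∑ j' ∈ Finset.univ.erase j, ∑ i, X i j' * Real.exp (u i + v j') := by
    rw [← Finset.add_sum_erase Finset.univ _ hmem]
    congr 1
    · rw [Function.update_self, hS, Finset.mul_sum]
      refine Finset.sum_congr rfl fun i _ => ?_
      rw [show u i + (v j + t) = t + (u i + v j) by ring, Real.exp_add]; ring
    · refine Finset.sum_congr rfl fun k hk => ?_
      rw [Function.update_of_ne (Finset.ne_of_mem_erase hk)]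
  have e2 : ∑ j', ∑ i, X i j' * Real.exp (u i + v j')
      = S + ∑ j' ∈ Finset.univ.erase j, ∑ i, X i j' * Real.exp (u i + v j') := by
    rw [← Finset.add_sum_erase Finset.univ _ hmem]
  have e3 : ∑ j', Function.update v j (v j + t) j' = t + ∑ j', v j' := by
    rw [Finset.sum_update_of_mem hmem, ← Finset.add_sum_erase Finset.univ v hmem,
      Finset.erase_eq]
    ring
  rw [e1, e3, e2]
  ring


lemma sinkhorn_exists (hn : 0 < n) (X : Matrix (Fin n) (Fin n) ℝ)
    (hX : ∀ i j, 0 < X i j) :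
    ∃ u v : Fin n → ℝ,
      (∀ i, ∑ j, X i j * Real.exp (u i + v j) = 1) ∧
      (∀ j, ∑ i, X i j * Real.exp (u i + v j) = 1) := by
  classical
  haveI : Nonempty (Fin n) := ⟨⟨0, hn⟩⟩
  -- min entry
  obtain ⟨⟨i₁, j₁⟩, -, hmin⟩ := Finset.exists_min_image Finset.univ
    (fun p : Fin n × Fin n => X p.1 p.2) Finset.univ_nonempty
  set m := X i₁ j₁ with hm
  have hmpos : 0 < m := hX i₁ j₁
  have hmX : ∀ i j, m ≤ X i j := fun i j => hmin (i, j) (Finset.mem_univ _)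
  set C := sinkhornPhi X 0 with hC
  have hCval : C = ∑ i, ∑ j, X i j := by
    simp [hC, sinkhornPhi]
  have hCpos : 0 < C := by
    rw [hCval]
    exact Finset.sum_pos (fun i _ => Finset.sum_pos (fun j _ => hX i j) Finset.univ_nonempty)
      Finset.univ_nonempty
  set B : ℝ := (n+1) * (max 1 ((4*C+4*n+4)/m) + C + 1) with hB
  have hBpos : 0 < B := by
    have h1 : (1:ℝ) ≤ max 1 ((4*C+4*n+4)/m) := le_max_left _ _
    have : (0:ℝ) < n + 1 := by positivity
    nlinarith
  set K : Set ((Fin n → ℝ) × (Fin n → ℝ)) :=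
    {p | (∑ i, p.1 i = 0) ∧ sinkhornPhi X p ≤ C} with hK
  have hKclosed : IsClosed K := by
    apply IsClosed.inter
    · have : Continuous fun p : (Fin n → ℝ) × (Fin n → ℝ) => ∑ i, p.1 i := by fun_prop
      exact isClosed_eq this continuous_const
    · exact isClosed_le (sinkhornPhi_continuous X) continuous_const
  have hKbdd : Bornology.IsBounded K := by
    apply Bornology.IsBounded.subset (Metric.isBounded_closedBall (x := (0:(Fin n → ℝ) × (Fin n → ℝ))) (r := B))
    rintro ⟨u, v⟩ ⟨h1, h2⟩
    have hb := sinkhorn_bound hn X m hmpos hmX C hCpos u v h1 h2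
    rw [Metric.mem_closedBall, Prod.dist_eq]
    rw [max_le_iff]
    refine ⟨(dist_pi_le_iff hBpos.le).2 fun i => ?_, (dist_pi_le_iff hBpos.le).2 fun i => ?_⟩
    · rw [Real.dist_eq]; simpa using (hb i).1
    · rw [Real.dist_eq]; simpa using (hb i).2
  have hKcompact : IsCompact K := Metric.isCompact_of_isClosed_isBounded hKclosed hKbdd
  have h0K : (0 : (Fin n → ℝ) × (Fin n → ℝ)) ∈ K := by
    constructor
    · simp
    · exact le_refl _
  obtain ⟨p₀, hp₀K, hp₀min⟩ := hKcompact.exists_isMinOn ⟨0, h0K⟩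
    (sinkhornPhi_continuous X).continuousOn
  -- global minimality
  have hglobal : ∀ q, sinkhornPhi X p₀ ≤ sinkhornPhi X q := by
    intro q
    set c : ℝ := (∑ i, q.1 i) / n with hc
    set q' : (Fin n → ℝ) × (Fin n → ℝ) := (fun i => q.1 i - c, fun j => q.2 j + c) with hq'
    have hφeq : sinkhornPhi X q' = sinkhornPhi X q := by
      rw [hq']
      rw [show q = (q.1, q.2) from rfl] at *
      exact sinkhornPhi_shift X q.1 q.2 c
    have hsum0 : ∑ i, q'.1 i = 0 := by
      rw [hq']
      simp only [Finset.sum_sub_distrib, Finset.sum_const, Finset.card_univ, Fintype.card_fin,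
        nsmul_eq_mul, hc]
      field_simp
      simp
    by_cases h : sinkhornPhi X q ≤ C
    · have : q' ∈ K := ⟨hsum0, by rw [hφeq]; exact h⟩
      calc sinkhornPhi X p₀ ≤ sinkhornPhi X q' := hp₀min this
      _ = sinkhornPhi X q := hφeq
    · push_neg at h
      calc sinkhornPhi X p₀ ≤ C := hp₀min h0K
      _ ≤ sinkhornPhi X q := h.le
  obtain ⟨u, v⟩ := p₀
  refine ⟨u, v, ?_, ?_⟩
  · intro i
    set S := ∑ j, X i j * Real.exp (u i + v j) with hS
    have hSpos : 0 < S :=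
      Finset.sum_pos (fun j _ => mul_pos (hX i j) (Real.exp_pos _)) Finset.univ_nonempty
    have hineq : ∀ t : ℝ, t ≤ S * (Real.exp t - 1) := by
      intro t
      have h := hglobal (Function.update u i (u i + t), v)
      rw [sinkhornPhi_update_fst X u v i t] at h
      rw [← hS] at h
      linarith
    have h2 := hineq (-Real.log S)
    rw [Real.exp_neg, Real.exp_log hSpos] at h2
    have h3 : S * (S⁻¹ - 1) = 1 - S := by field_simp
    rw [h3] at h2
    by_contra hne
    have := Real.log_lt_sub_one_of_pos hSpos hne
    linarith
  · intro j
    set S := ∑ i, X i j * Real.exp (u i + v j) with hS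
    have hSpos : 0 < S :=
      Finset.sum_pos (fun i _ => mul_pos (hX i j) (Real.exp_pos _)) Finset.univ_nonempty
    have hineq : ∀ t : ℝ, t ≤ S * (Real.exp t - 1) := by
      intro t
      have h := hglobal (u, Function.update v j (v j + t))
      rw [sinkhornPhi_update_snd X u v j t] at h
      rw [← hS] at h
      linarith
    have h2 := hineq (-Real.log S)
    rw [Real.exp_neg, Real.exp_log hSpos] at h2
    have h3 : S * (S⁻¹ - 1) = 1 - S := by field_simp
    rw [h3] at h2
    by_contra hne
    have := Real.log_lt_sub_one_of_pos hSpos hne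
    linarith


end SinkhornAux

lemma diag_entry {n : ℕ} (X : Matrix (Fin n) (Fin n) ℝ) (f g : Fin n → ℝ) (i j : Fin n) :
    (Matrix.diagonal f * X * Matrix.diagonal g) i j = f i * X i j * g j := by
  simp [Matrix.mul_diagonal, Matrix.diagonal_mul]

/-- **Sinkhorn's theorem.** For an `n×n` real matrix `X` with strictly positive
entries there exist diagonal matrices `D₁ = diagonal d₁`, `D₂ = diagonal d₂` with
strictly positive diagonal entries such that `T_X = D₁ X D₂` is doubly stochastic;
`T_X` is unique, and `D₁`, `D₂` are unique up to replacing `(D₁, D₂)` by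
`(c·D₁, c⁻¹·D₂)` for a positive scalar `c`. -/
theorem sinkhorn {n : ℕ} (X : Matrix (Fin n) (Fin n) ℝ)
    (hX : ∀ i j, 0 < X i j) :
    ∃ d₁ d₂ : Fin n → ℝ,
      (∀ i, 0 < d₁ i) ∧ (∀ i, 0 < d₂ i) ∧
      IsDoublyStochastic (Matrix.diagonal d₁ * X * Matrix.diagonal d₂) ∧
      ∀ e₁ e₂ : Fin n → ℝ, (∀ i, 0 < e₁ i) → (∀ i, 0 < e₂ i) →
        IsDoublyStochastic (Matrix.diagonal e₁ * X * Matrix.diagonal e₂) →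
        Matrix.diagonal e₁ * X * Matrix.diagonal e₂ =
          Matrix.diagonal d₁ * X * Matrix.diagonal d₂ ∧
        ∃ c : ℝ, 0 < c ∧ e₁ = (fun i => c * d₁ i) ∧ e₂ = (fun i => c⁻¹ * d₂ i) := by
  classical
  rcases Nat.eq_zero_or_pos n with hn | hn
  · subst hn
    refine ⟨fun _ => 1, fun _ => 1, fun i => i.elim0, fun i => i.elim0,
      ⟨fun i => i.elim0, fun i => i.elim0, fun j => j.elim0⟩, ?_⟩
    intro e₁ e₂ _ _ _
    refine ⟨?_, 1, one_pos, ?_, ?_⟩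
    · ext i j; exact i.elim0
    · funext i; exact i.elim0
    · funext i; exact i.elim0
  · haveI : Nonempty (Fin n) := ⟨⟨0, hn⟩⟩
    obtain ⟨u, v, hrow, hcol⟩ := sinkhorn_exists hn X hX
    set d₁ : Fin n → ℝ := fun i => Real.exp (u i) with hd₁
    set d₂ : Fin n → ℝ := fun j => Real.exp (v j) with hd₂
    have hd₁pos : ∀ i, 0 < d₁ i := fun i => Real.exp_pos _
    have hd₂pos : ∀ j, 0 < d₂ j := fun j => Real.exp_pos _
    set a : Fin n → Fin n → ℝ := fun i j => d₁ i * X i j * d₂ j with ha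
    have haentry : ∀ i j, (Matrix.diagonal d₁ * X * Matrix.diagonal d₂) i j = a i j :=
      fun i j => diag_entry X d₁ d₂ i j
    have hapos : ∀ i j, 0 < a i j := fun i j =>
      mul_pos (mul_pos (hd₁pos i) (hX i j)) (hd₂pos j)
    have haval : ∀ i j, a i j = X i j * Real.exp (u i + v j) := by
      intro i j; rw [ha]; simp only [hd₁, hd₂]; rw [Real.exp_add]; ring
    have harow : ∀ i, ∑ j, a i j = 1 := by
      intro i
      rw [Finset.sum_congr rfl fun j _ => haval i j]
      exact hrow i
    have hacol : ∀ j, ∑ i, a i j = 1 := by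
      intro j
      rw [Finset.sum_congr rfl fun i _ => haval i j]
      exact hcol j
    have hDS : IsDoublyStochastic (Matrix.diagonal d₁ * X * Matrix.diagonal d₂) := by
      refine ⟨fun i j => ?_, fun i => ?_, fun j => ?_⟩
      · rw [haentry]; exact (hapos i j).le
      · rw [Finset.sum_congr rfl fun j _ => haentry i j]; exact harow i
      · rw [Finset.sum_congr rfl fun i _ => haentry i j]; exact hacol j
    refine ⟨d₁, d₂, hd₁pos, hd₂pos, hDS, ?_⟩
    intro e₁ e₂ he₁ he₂ hB
    set r : Fin n → ℝ := fun i => e₁ i / d₁ i with hr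
    set c : Fin n → ℝ := fun j => e₂ j / d₂ j with hc
    have hrpos : ∀ i, 0 < r i := fun i => div_pos (he₁ i) (hd₁pos i)
    have hcpos : ∀ j, 0 < c j := fun j => div_pos (he₂ j) (hd₂pos j)
    have hbentry : ∀ i j, (Matrix.diagonal e₁ * X * Matrix.diagonal e₂) i j
        = r i * a i j * c j := by
      intro i j
      rw [diag_entry, hr, hc, ha]
      field_simp
      field_simp [(hd₁pos i).ne', (hd₂pos j).ne']
    have hBrow : ∀ i, ∑ j, r i * a i j * c j = 1 := by
      intro i
      rw [← Finset.sum_congr rfl fun j _ => hbentry i j]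
      exact hB.2.1 i
    have hBcol : ∀ j, ∑ i, r i * a i j * c j = 1 := by
      intro j
      rw [← Finset.sum_congr rfl fun i _ => hbentry i j]
      exact hB.2.2 j
    obtain ⟨i₀, -, hi₀⟩ := Finset.exists_max_image Finset.univ r Finset.univ_nonempty
    set M := r i₀ with hM
    have hMpos : 0 < M := hrpos i₀
    -- step 1 : 1/M ≤ c j
    have step1 : ∀ j, 1/M ≤ c j := by
      intro j
      have h1 : (1:ℝ) = ∑ i, r i * a i j * c j := (hBcol j).symm
      have h2 : ∑ i, r i * a i j * c j ≤ ∑ i, M * a i j * c j :=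
        Finset.sum_le_sum fun i _ =>
          mul_le_mul_of_nonneg_right
            (mul_le_mul_of_nonneg_right (hi₀ i (Finset.mem_univ i)) (hapos i j).le)
            (hcpos j).le
      have h3 : ∑ i, M * a i j * c j = M * c j := by
        have : ∑ i, M * a i j * c j = (M * c j) * ∑ i, a i j := by
          rw [Finset.mul_sum]
          exact Finset.sum_congr rfl fun i _ => by ring
        rw [this, hacol j, mul_one]
      rw [div_le_iff₀ hMpos]
      have : (1:ℝ) ≤ M * c j := by rw [h3] at h2; linarith
      linarith [this]
    -- step 2 : c j = 1/M
    have step2 : ∀ j, c j = 1/M := by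
      have hsum : ∑ j, a i₀ j * c j = 1/M := by
        have h1 : M * ∑ j, a i₀ j * c j = 1 := by
          rw [Finset.mul_sum, ← hBrow i₀]
          exact Finset.sum_congr rfl fun j _ => by rw [← hM]; ring
        field_simp at h1 ⊢
        linarith
      have hsum2 : ∑ j, a i₀ j * (1/M) = 1/M := by
        rw [← Finset.sum_mul, harow i₀, one_mul]
      have hle : ∀ j ∈ Finset.univ, a i₀ j * (1/M) ≤ a i₀ j * c j :=
        fun j _ => mul_le_mul_of_nonneg_left (step1 j) (hapos i₀ j).le
      have := (Finset.sum_eq_sum_iff_of_le hle).1 (by rw [hsum, hsum2])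
      intro j
      have h := (this j (Finset.mem_univ j)).symm
      exact mul_left_cancel₀ (ne_of_gt (hapos i₀ j)) h
    -- step 3 : r i = M
    have step3 : ∀ i, r i = M := by
      intro i
      have h1 : ∑ j, r i * a i j * c j = r i * (1/M) := by
        rw [Finset.sum_congr rfl fun j _ => by rw [step2 j]]
        rw [show ∑ j, r i * a i j * (1/M) = (r i * (1/M)) * ∑ j, a i j by
          rw [Finset.mul_sum]; exact Finset.sum_congr rfl fun j _ => by ring]
        rw [harow i, mul_one]
      have h2 := hBrow i
      rw [h1] at h2
      field_simp at h2
      linarith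
    -- conclude
    have he₁eq : e₁ = fun i => M * d₁ i := by
      funext i
      have := step3 i
      rw [hr] at this
      rw [div_eq_iff (ne_of_gt (hd₁pos i))] at this
      rw [this]
    have he₂eq : e₂ = fun j => M⁻¹ * d₂ j := by
      funext j
      have := step2 j
      rw [hc] at this
      rw [div_eq_iff (ne_of_gt (hd₂pos j))] at this
      rw [this, one_div]
    refine ⟨?_, M, hMpos, he₁eq, he₂eq⟩
    ext i j
    rw [hbentry i j, haentry i j, step2 j, step3 i]
    field_simp
end

section
/- (Marcus–Newman) Let X be an n×n real matrix that is symmetric and has all entries strictly positive. Then there exists a diagonal matrix D with strictly positive diagonal entries such that D X D is doubly stochastic. -/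
open Matrix

open Finset

/-- **Marcus–Newman.** For an `n×n` real matrix `X` that is symmetric with all
entries strictly positive, there exists a diagonal matrix `D = diagonal d` with
strictly positive diagonal entries such that `D X D` is doubly stochastic. -/
theorem marcus_newman {n : ℕ} (X : Matrix (Fin n) (Fin n) ℝ)
    (hsymm : X.IsSymm) (hX : ∀ i j, 0 < X i j) :
    ∃ d : Fin n → ℝ, (∀ i, 0 < d i) ∧
      IsDoublyStochastic (Matrix.diagonal d * X * Matrix.diagonal d) := by
  rcases Nat.eq_zero_or_pos n with hn | hn
  · subst hn
    exact ⟨fun _ => 1, fun i => i.elim0, fun i => i.elim0, fun i => i.elim0, fun j => j.elim0⟩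
  have i0 : Fin n := ⟨0, hn⟩
  obtain ⟨f, hfeq⟩ : ∃ f : (Fin n → ℝ) → ℝ,
      f = fun x => (∑ k, ∑ j, X k j * x k * x j) / 2 - ∑ k, Real.log (x k) := ⟨_, rfl⟩
  obtain ⟨c, hcle, hc0⟩ : ∃ c : ℝ, (∀ i, c ≤ X i i) ∧ 0 < c :=
    ⟨Finset.univ.inf' ⟨i0, Finset.mem_univ i0⟩ (fun i => X i i),
      fun i => Finset.inf'_le _ (mem_univ i),
      (Finset.lt_inf'_iff _).mpr (fun i _ => hX i i)⟩
  obtain ⟨M, hM⟩ : ∃ M : ℝ, M = f (fun _ => 1) := ⟨_, rfl⟩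
  obtain ⟨R, hR1, hRM⟩ : ∃ R : ℝ, 1 ≤ R ∧ M < c * (R * R) / 2 - n * R := by
    have main : ∀ RR : ℝ, 1 ≤ RR → 2 * ((n:ℝ) + |M| + 1) ≤ RR * c →
        M < c * (RR * RR) / 2 - n * RR := by
      intro RR h1 h3
      have h4 : (n:ℝ) + |M| + 1 ≤ c * RR / 2 := by linarith
      have h5 : 0 ≤ (RR - 1) * (c * RR / 2 - n) := by
        apply mul_nonneg (by linarith)
        linarith [abs_nonneg M]
      nlinarith [le_abs_self M]
    refine ⟨max 1 ((2 * (n + |M| + 1)) / c), le_max_left _ _, main _ (le_max_left _ _) ?_⟩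
    exact (div_le_iff₀ hc0).mp (le_max_right _ _)
  have hR0 : (0:ℝ) < R := lt_of_lt_of_le one_pos hR1
  have hlogR : 0 ≤ Real.log R := Real.log_nonneg hR1
  obtain ⟨ε, hε0, hε1, hεlog⟩ : ∃ ε : ℝ, 0 < ε ∧ ε ≤ 1 ∧
      Real.log ε ≤ -(M + n * Real.log R + 1) := by
    refine ⟨min 1 (Real.exp (-(M + n * Real.log R + 1))),
      lt_min one_pos (Real.exp_pos _), min_le_left _ _, ?_⟩
    calc Real.log _ ≤ Real.log (Real.exp (-(M + n * Real.log R + 1))) :=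
          Real.log_le_log (lt_min one_pos (Real.exp_pos _)) (min_le_right _ _)
      _ = _ := Real.log_exp _
  have h1K : (fun _ => (1:ℝ)) ∈ Set.Icc (fun _ : Fin n => ε) (fun _ => R) :=
    Set.mem_Icc.mpr ⟨fun k => hε1, fun k => hR1⟩
  have hfc : ContinuousOn f (Set.Icc (fun _ : Fin n => ε) (fun _ => R)) := by
    rw [hfeq]
    intro x hx
    apply ContinuousAt.continuousWithinAt
    apply ContinuousAt.sub
    · exact ((continuous_finset_sum _ fun k _ => continuous_finset_sum _ fun j _ =>
        ((continuous_const.mul (continuous_apply k)).mul (continuous_apply j))).div_const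
        2).continuousAt
    · have hterm : ∀ k ∈ (univ : Finset (Fin n)),
          ContinuousAt (fun x : Fin n → ℝ => Real.log (x k)) x := by
        intro k _
        have hxk : x k ≠ 0 := ne_of_gt (lt_of_lt_of_le hε0 (hx.1 k))
        exact ContinuousAt.comp (g := Real.log) (Real.continuousAt_log hxk)
          ((continuous_apply k).continuousAt : ContinuousAt (fun y : Fin n → ℝ => y k) x)
      exact tendsto_finset_sum _ hterm
  obtain ⟨x₀, hx₀K, hmin⟩ := isCompact_Icc.exists_isMinOn ⟨_, h1K⟩ hfc
  have hx₀M : f x₀ ≤ M := by rw [hM]; exact hmin h1K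
  -- the minimum cannot be on the boundary of the box
  have key : ∀ x ∈ Set.Icc (fun _ : Fin n => ε) (fun _ => R), f x ≤ M →
      ∀ i, ε < x i ∧ x i < R := by
    intro x hx hfx i
    rw [hfeq] at hfx
    simp only at hfx
    have hxε : ∀ k, ε ≤ x k := hx.1
    have hxR : ∀ k, x k ≤ R := hx.2
    have hxpos : ∀ k, 0 < x k := fun k => lt_of_lt_of_le hε0 (hxε k)
    have hterm : ∀ k j, 0 ≤ X k j * x k * x j := fun k j =>
      mul_nonneg (mul_nonneg (hX k j).le (hxpos k).le) (hxpos j).le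
    have Qnn : 0 ≤ ∑ k, ∑ j, X k j * x k * x j :=
      Finset.sum_nonneg fun k _ => Finset.sum_nonneg fun j _ => hterm k j
    have Qi : X i i * x i * x i ≤ ∑ k, ∑ j, X k j * x k * x j := by
      calc X i i * x i * x i ≤ ∑ j, X i j * x i * x j :=
            Finset.single_le_sum (fun j _ => hterm i j) (mem_univ i)
        _ ≤ _ := Finset.single_le_sum
            (fun k _ => Finset.sum_nonneg fun j _ => hterm k j) (mem_univ i)
    have hlogk : ∀ k, Real.log (x k) ≤ Real.log R := fun k => Real.log_le_log (hxpos k) (hxR k)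
    have logsum : ∑ k, Real.log (x k) ≤ n * Real.log R := by
      calc ∑ k, Real.log (x k) ≤ ∑ _k : Fin n, Real.log R :=
            Finset.sum_le_sum fun k _ => hlogk k
        _ = n * Real.log R := by simp [Finset.sum_const, nsmul_eq_mul]
    have logsum2 : ∑ k, Real.log (x k) ≤ Real.log (x i) + n * Real.log R := by
      rw [← Finset.add_sum_erase _ _ (mem_univ i)]
      have h2 : ∑ k ∈ univ.erase i, Real.log (x k) ≤ ∑ _k ∈ univ.erase i, Real.log R :=
        Finset.sum_le_sum fun k _ => hlogk k
      have h3 : ((univ.erase i).card : ℝ) * Real.log R ≤ n * Real.log R := by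
        apply mul_le_mul_of_nonneg_right _ hlogR
        exact_mod_cast (Finset.card_le_card (Finset.erase_subset _ _)).trans (by simp)
      simp only [Finset.sum_const, nsmul_eq_mul] at h2
      linarith [h2.trans h3]
    constructor
    · by_contra h
      push_neg at h
      have hxi : x i = ε := le_antisymm h (hxε i)
      rw [hxi] at logsum2
      linarith
    · by_contra h
      push_neg at h
      have hxi : x i = R := le_antisymm (hxR i) h
      have hlogRR : Real.log R ≤ R := (Real.log_le_sub_one_of_pos hR0).trans (by linarith)
      have h1 : c * (R * R) ≤ X i i * x i * x i := by
        rw [hxi]; nlinarith [hcle i, hR0]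
      have h2 : (n:ℝ) * Real.log R ≤ n * R :=
        mul_le_mul_of_nonneg_left hlogRR (Nat.cast_nonneg n)
      linarith
  have hint : ∀ i, ε < x₀ i ∧ x₀ i < R := key x₀ hx₀K hx₀M
  have hx₀pos : ∀ i, 0 < x₀ i := fun i => lt_of_lt_of_le hε0 (hx₀K.1 i)
  -- x₀ is a local minimum in the ambient space
  have hKn : Set.Icc (fun _ : Fin n => ε) (fun _ => R) ∈ nhds x₀ := by
    rw [mem_nhds_iff]
    refine ⟨Set.pi Set.univ (fun _ => Set.Ioo ε R), ?_, ?_, ?_⟩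
    · intro x hx
      exact Set.mem_Icc.mpr ⟨fun k => (hx k (Set.mem_univ k)).1.le,
        fun k => (hx k (Set.mem_univ k)).2.le⟩
    · exact isOpen_set_pi Set.finite_univ (fun _ _ => isOpen_Ioo)
    · exact fun k _ => ⟨(hint k).1, (hint k).2⟩
  have hloc : IsLocalMin f x₀ := hmin.isLocalMin hKn
  -- the first-order condition gives the row sums
  have hrow : ∀ i, x₀ i * ∑ j, X i j * x₀ j = 1 := by
    intro i
    have ht₀ : 0 < x₀ i := hx₀pos i
    have hgloc : IsLocalMin (fun t => f (Function.update x₀ i t)) (x₀ i) := by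
      have hcont : Continuous (fun t : ℝ => Function.update x₀ i t) := by
        apply continuous_pi
        intro k
        rcases eq_or_ne k i with hk | hk
        · subst hk; simpa using continuous_id'
        · simp only [Function.update_of_ne hk]; exact continuous_const
      have hupd : Function.update x₀ i (x₀ i) = x₀ := Function.update_eq_self i x₀
      have htend : Filter.Tendsto (fun t => Function.update x₀ i t) (nhds (x₀ i)) (nhds x₀) := by
        have := hcont.continuousAt (x := x₀ i)
        rwa [ContinuousAt, hupd] at this
      have hev := htend.eventually hloc
      refine hev.mono fun t ht => ?_
      simpa [hupd] using ht
    -- derivative of the quadratic part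
    have hQ : HasDerivAt (fun t => ∑ k, ∑ j,
        X k j * Function.update x₀ i t k * Function.update x₀ i t j)
        (2 * ∑ j, X i j * x₀ j) (x₀ i) := by
      have hterm : ∀ k j, HasDerivAt
          (fun t => X k j * Function.update x₀ i t k * Function.update x₀ i t j)
          ((if k = i then X k j * x₀ j else 0) + (if j = i then X k j * x₀ k else 0)) (x₀ i) := by
        intro k j
        by_cases hk : k = i <;> by_cases hj : j = i
        · have hfn : (fun t => X k j * Function.update x₀ i t k * Function.update x₀ i t j)
              = fun t => X i i * t * t := by
            funext t; rw [hk, hj, Function.update_self]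
          rw [hfn, if_pos hk, if_pos hj, hk, hj]
          have h := ((hasDerivAt_id' (x₀ i)).const_mul (X i i)).mul (hasDerivAt_id' (x₀ i))
          convert h using 1
          · rfl
          · rfl
          · rfl
          ring
        · have hfn : (fun t => X k j * Function.update x₀ i t k * Function.update x₀ i t j)
              = fun t => X i j * t * x₀ j := by
            funext t; rw [hk, Function.update_self, Function.update_of_ne hj]
          rw [hfn, if_pos hk, if_neg hj, add_zero, hk]
          have h := ((hasDerivAt_id' (x₀ i)).const_mul (X i j)).mul_const (x₀ j)
          convert h using 1
          · rfl
          · rfl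
          ring
        · have hfn : (fun t => X k j * Function.update x₀ i t k * Function.update x₀ i t j)
              = fun t => X k i * x₀ k * t := by
            funext t; rw [hj, Function.update_self, Function.update_of_ne hk]
          rw [hfn, if_neg hk, if_pos hj, zero_add, hj]
          have h := (hasDerivAt_id' (x₀ i)).const_mul (X k i * x₀ k)
          convert h using 1
          · rfl
          · rfl
          ring
        · have hfn : (fun t => X k j * Function.update x₀ i t k * Function.update x₀ i t j)
              = fun _ => X k j * x₀ k * x₀ j := by
            funext t; rw [Function.update_of_ne hk, Function.update_of_ne hj]
          rw [hfn, if_neg hk, if_neg hj, add_zero]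
          exact hasDerivAt_const _ _
      have h := HasDerivAt.sum (fun k (_ : k ∈ (univ : Finset (Fin n))) =>
        HasDerivAt.sum (fun j (_ : j ∈ (univ : Finset (Fin n))) => hterm k j))
      convert h using 1
      · rfl
      · rfl
      · funext t; simp only [Finset.sum_apply]
      have e : ∀ k : Fin n, (∑ j, ((if k = i then X k j * x₀ j else 0)
          + (if j = i then X k j * x₀ k else 0)))
          = (if k = i then ∑ j, X i j * x₀ j else 0) + X k i * x₀ k := by
        intro k
        rw [Finset.sum_add_distrib]
        congr 1
        · split_ifs with h
          · subst h; rfl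
          · simp
        · rw [Finset.sum_ite_eq' univ i (fun j => X k j * x₀ k)]; simp
      rw [Finset.sum_congr rfl (fun k _ => e k), Finset.sum_add_distrib,
        Finset.sum_ite_eq' univ i (fun _ => ∑ j, X i j * x₀ j)]
      have hcol : ∑ k, X k i * x₀ k = ∑ j, X i j * x₀ j :=
        Finset.sum_congr rfl fun k _ => by rw [hsymm.apply i k]
      rw [hcol]
      simp only [mem_univ, if_true]
      ring
    -- derivative of the log part
    have hL : HasDerivAt (fun t => ∑ k, Real.log (Function.update x₀ i t k))
        (1 / x₀ i) (x₀ i) := by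
      have hterm : ∀ k : Fin n, HasDerivAt (fun t => Real.log (Function.update x₀ i t k))
          (if k = i then 1 / x₀ i else 0) (x₀ i) := by
        intro k
        rcases eq_or_ne k i with hk | hk
        · have hfn : (fun t => Real.log (Function.update x₀ i t k)) = Real.log := by
            funext t; rw [hk, Function.update_self]
          rw [hfn, if_pos hk, one_div]
          exact Real.hasDerivAt_log (ne_of_gt ht₀)
        · have hfn : (fun t => Real.log (Function.update x₀ i t k))
              = fun _ => Real.log (x₀ k) := by
            funext t; rw [Function.update_of_ne hk]
          rw [hfn, if_neg hk]
          exact hasDerivAt_const _ _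
      have h := HasDerivAt.sum (fun k (_ : k ∈ (univ : Finset (Fin n))) => hterm k)
      convert h using 1
      · rfl
      · rfl
      · funext t; simp only [Finset.sum_apply]
      rw [Finset.sum_ite_eq' univ i (fun _ => 1 / x₀ i)]
      simp
    have hgd : HasDerivAt (fun t => f (Function.update x₀ i t))
        ((2 * ∑ j, X i j * x₀ j) / 2 - 1 / x₀ i) (x₀ i) := by
      have hfun : (fun t => f (Function.update x₀ i t))
          = fun t => (∑ k, ∑ j, X k j * Function.update x₀ i t k * Function.update x₀ i t j) / 2
            - ∑ k, Real.log (Function.update x₀ i t k) := by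
        funext t; rw [hfeq]
      rw [hfun]
      exact (hQ.div_const 2).sub hL
    have hd0 : (2 * ∑ j, X i j * x₀ j) / 2 - 1 / x₀ i = 0 := by
      rw [← hgd.deriv]; exact hgloc.deriv_eq_zero
    have hseq : (∑ j, X i j * x₀ j) = 1 / x₀ i := by linarith
    rw [hseq]
    field_simp
  -- conclusion
  have hent : ∀ i j, (Matrix.diagonal x₀ * X * Matrix.diagonal x₀) i j
      = x₀ i * X i j * x₀ j := by
    intro i j
    rw [Matrix.mul_diagonal, Matrix.diagonal_mul]
  refine ⟨x₀, hx₀pos, ?_, ?_, ?_⟩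
  · intro i j
    rw [hent i j]
    exact mul_nonneg (mul_nonneg (hx₀pos i).le (hX i j).le) (hx₀pos j).le
  · intro i
    calc ∑ j, (Matrix.diagonal x₀ * X * Matrix.diagonal x₀) i j
        = ∑ j, x₀ i * (X i j * x₀ j) := Finset.sum_congr rfl fun j _ => by
          rw [hent i j]; ring
      _ = x₀ i * ∑ j, X i j * x₀ j := by rw [Finset.mul_sum]
      _ = 1 := hrow i
  · intro j
    calc ∑ i, (Matrix.diagonal x₀ * X * Matrix.diagonal x₀) i j
        = ∑ i, x₀ j * (X j i * x₀ i) := Finset.sum_congr rfl fun i _ => by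
          rw [hent i j, hsymm.apply j i]; ring
      _ = x₀ j * ∑ i, X j i * x₀ i := by rw [Finset.mul_sum]
      _ = 1 := hrow j
end

section
/- Let A be a real invertible N×N matrix with singular value decomposition A = U Σ Vᵀ, and let B = U Vᵀ be the orthogonal matrix minimizing Tr((A − Z)ᵀ(A − Z)) over orthogonal Z. Then the orthogonal N²×N² matrix minimizing Tr((A⊗A − Z₂)ᵀ(A⊗A − Z₂)) over orthogonal N²×N² matrices Z₂ is Z₂ = B ⊗ B = (U⊗U)(V⊗V)ᵀ; i.e., the optimal collective von Neumann measurement on two copies of the signal set is the tensor product of the optimal individual measurements. -/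
open Matrix
open scoped Kronecker

section Procrustes

variable {n : Type*} [Fintype n] [DecidableEq n]

lemma procrustes (A U V : Matrix n n ℝ) (d : n → ℝ)
    (hU : Uᵀ * U = 1) (hV : Vᵀ * V = 1) (hd : ∀ i, 0 < d i)
    (hSVD : A = U * Matrix.diagonal d * Vᵀ) :
    (∀ Z : Matrix n n ℝ, Zᵀ * Z = 1 →
      ((A - U * Vᵀ)ᵀ * (A - U * Vᵀ)).trace ≤ ((A - Z)ᵀ * (A - Z)).trace) ∧
    (∀ Z : Matrix n n ℝ, Zᵀ * Z = 1 →
      ((A - Z)ᵀ * (A - Z)).trace = ((A - U * Vᵀ)ᵀ * (A - U * Vᵀ)).trace →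
      Z = U * Vᵀ) := by
  have hU' : U * Uᵀ = 1 := mul_eq_one_comm.mp hU
  have hV' : V * Vᵀ = 1 := mul_eq_one_comm.mp hV
  -- expansion of the objective
  have expand : ∀ Z : Matrix n n ℝ, Zᵀ * Z = 1 →
      ((A - Z)ᵀ * (A - Z)).trace
        = (Aᵀ * A).trace + (1 : Matrix n n ℝ).trace - 2 * (Aᵀ * Z).trace := by
    intro Z hZ
    have : (A - Z)ᵀ * (A - Z) = Aᵀ * A - Aᵀ * Z - Zᵀ * A + Zᵀ * Z := by
      rw [transpose_sub]; noncomm_ring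
    rw [this, hZ, trace_add, trace_sub, trace_sub]
    have : (Zᵀ * A).trace = (Aᵀ * Z).trace := by
      rw [← trace_transpose (Zᵀ * A), transpose_mul, transpose_transpose]
    rw [this]; ring
  -- trace of AᵀZ in terms of W = Uᵀ Z V
  have traceAZ : ∀ Z : Matrix n n ℝ,
      (Aᵀ * Z).trace = ∑ i, d i * (Uᵀ * Z * V) i i := by
    intro Z
    rw [hSVD]
    have h1 : (U * Matrix.diagonal d * Vᵀ)ᵀ * Z = V * (Matrix.diagonal d * (Uᵀ * Z)) := by
      rw [transpose_mul, transpose_mul, transpose_transpose, Matrix.diagonal_transpose,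
        Matrix.mul_assoc, Matrix.mul_assoc]
    have h2 : (V * (Matrix.diagonal d * (Uᵀ * Z))).trace
        = (Matrix.diagonal d * (Uᵀ * Z * V)).trace := by
      rw [Matrix.trace_mul_comm, Matrix.mul_assoc, Matrix.mul_assoc]
    rw [h1, h2]
    simp [Matrix.trace, Matrix.diag, Matrix.diagonal_mul]
  -- W is orthogonal
  have hW : ∀ Z : Matrix n n ℝ, Zᵀ * Z = 1 →
      (Uᵀ * Z * V)ᵀ * (Uᵀ * Z * V) = 1 := by
    intro Z hZ
    simp only [transpose_mul, transpose_transpose, Matrix.mul_assoc]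
    rw [← Matrix.mul_assoc U Uᵀ, hU', Matrix.one_mul, ← Matrix.mul_assoc Zᵀ Z, hZ,
      Matrix.one_mul, hV]
  have colnorm : ∀ Z : Matrix n n ℝ, Zᵀ * Z = 1 → ∀ i : n,
      ∑ j, ((Uᵀ * Z * V) j i) ^ 2 = 1 := by
    intro Z hZ i
    set W := Uᵀ * Z * V with hWdef
    have h := congrFun (congrFun (hW Z hZ) i) i
    simp only [Matrix.mul_apply, Matrix.transpose_apply, Matrix.one_apply_eq] at h
    simpa [sq, hWdef, Matrix.mul_apply] using h
  have diag_le : ∀ Z : Matrix n n ℝ, Zᵀ * Z = 1 → ∀ i : n, (Uᵀ * Z * V) i i ≤ 1 := by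
    intro Z hZ i
    have h := colnorm Z hZ i
    have h2 : ((Uᵀ * Z * V) i i) ^ 2 ≤ 1 := by
      rw [← h]
      exact Finset.single_le_sum (f := fun j => ((Uᵀ * Z * V) j i) ^ 2)
        (fun j _ => sq_nonneg _) (Finset.mem_univ i)
    nlinarith
  -- W for B = U Vᵀ is the identity
  have hWB : Uᵀ * (U * Vᵀ) * V = 1 := by
    rw [← Matrix.mul_assoc, hU, Matrix.one_mul, hV]
  have traceAB : (Aᵀ * (U * Vᵀ)).trace = ∑ i, d i := by
    rw [traceAZ, hWB]; simp [Matrix.one_apply]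
  have hBorth : (U * Vᵀ)ᵀ * (U * Vᵀ) = 1 := by
    calc (U * Vᵀ)ᵀ * (U * Vᵀ) = V * ((Uᵀ * U) * Vᵀ) := by
          simp [transpose_mul, Matrix.mul_assoc]
      _ = 1 := by rw [hU, Matrix.one_mul, hV']
  have key_le : ∀ Z : Matrix n n ℝ, Zᵀ * Z = 1 → (Aᵀ * Z).trace ≤ ∑ i, d i := by
    intro Z hZ
    rw [traceAZ]
    exact Finset.sum_le_sum fun i _ => by
      have := diag_le Z hZ i
      nlinarith [(hd i).le]
  constructor
  · intro Z hZ
    rw [expand Z hZ, expand _ hBorth, traceAB]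
    have := key_le Z hZ
    linarith
  · intro Z hZ heq
    rw [expand Z hZ, expand _ hBorth, traceAB] at heq
    have htr : (Aᵀ * Z).trace = ∑ i, d i := by linarith
    rw [traceAZ] at htr
    -- each diagonal entry of W equals 1
    have hdiag : ∀ i : n, (Uᵀ * Z * V) i i = 1 := by
      by_contra h
      push_neg at h
      obtain ⟨i, hi⟩ := h
      have hlt : (Uᵀ * Z * V) i i < 1 := lt_of_le_of_ne (diag_le Z hZ i) hi
      have : ∑ j, d j * (Uᵀ * Z * V) j j < ∑ j, d j := by
        apply Finset.sum_lt_sum (fun j _ => by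
          have := diag_le Z hZ j; nlinarith [(hd j).le]) ⟨i, Finset.mem_univ i, by nlinarith [hd i]⟩
      linarith
    -- W = 1
    have hW1 : Uᵀ * Z * V = 1 := by
      ext j i
      rcases eq_or_ne j i with rfl | hji
      · rw [hdiag j]; simp [Matrix.one_apply]
      · have h := colnorm Z hZ i
        have h1 : ((Uᵀ * Z * V) i i) ^ 2 = 1 := by rw [hdiag i]; norm_num
        have hrest : ∑ k ∈ Finset.univ.erase i, ((Uᵀ * Z * V) k i) ^ 2 = 0 := by
          have hsplit : ∑ k ∈ Finset.univ.erase i, ((Uᵀ * Z * V) k i) ^ 2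
              + ((Uᵀ * Z * V) i i) ^ 2 = ∑ k, ((Uᵀ * Z * V) k i) ^ 2 :=
            Finset.sum_erase_add _ _ (Finset.mem_univ i)
          linarith
        have hz : ((Uᵀ * Z * V) j i) ^ 2 = 0 := by
          have := (Finset.sum_eq_zero_iff_of_nonneg (fun k _ => sq_nonneg _)).mp hrest j
            (Finset.mem_erase.mpr ⟨hji, Finset.mem_univ j⟩)
          exact this
        have : (Uᵀ * Z * V) j i = 0 := by nlinarith
        simp [this, Matrix.one_apply, hji]
    have : U * (Uᵀ * Z * V) * Vᵀ = U * Vᵀ := by rw [hW1, Matrix.mul_one]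
    calc Z = U * (Uᵀ * Z * V) * Vᵀ := by
            rw [Matrix.mul_assoc, Matrix.mul_assoc, Matrix.mul_assoc, hV', Matrix.mul_one,
              ← Matrix.mul_assoc, hU', Matrix.one_mul]
      _ = U * Vᵀ := this

end Procrustes

/-- For a real invertible `N×N` matrix `A` with SVD `A = U Σ Vᵀ` and
`B = U Vᵀ` the orthogonal matrix minimizing `Tr((A − Z)ᵀ(A − Z))` over orthogonal
`Z`, the orthogonal `N²×N²` matrix minimizing `Tr((A⊗A − Z₂)ᵀ(A⊗A − Z₂))` over
orthogonal `Z₂` is `Z₂ = B ⊗ B = (U⊗U)(V⊗V)ᵀ`: the optimal collective von Neumann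
measurement on two copies of the signal set is the tensor product of the optimal
individual measurements. -/
theorem optimal_collective_measurement_eq_kronecker {N : ℕ}
    (A U V : Matrix (Fin N) (Fin N) ℝ) (d : Fin N → ℝ)
    (hA : IsUnit A.det)
    (hU : Uᵀ * U = 1) (hV : Vᵀ * V = 1)
    (hd : ∀ i, 0 < d i)
    (hSVD : A = U * Matrix.diagonal d * Vᵀ)
    (hBopt : ∀ Z : Matrix (Fin N) (Fin N) ℝ, Zᵀ * Z = 1 →
      ((A - U * Vᵀ)ᵀ * (A - U * Vᵀ)).trace ≤ ((A - Z)ᵀ * (A - Z)).trace) :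
    ((U * Vᵀ) ⊗ₖ (U * Vᵀ) = (U ⊗ₖ U) * (V ⊗ₖ V)ᵀ) ∧
    (∀ Z₂ : Matrix (Fin N × Fin N) (Fin N × Fin N) ℝ, Z₂ᵀ * Z₂ = 1 →
      ((A ⊗ₖ A - (U * Vᵀ) ⊗ₖ (U * Vᵀ))ᵀ * (A ⊗ₖ A - (U * Vᵀ) ⊗ₖ (U * Vᵀ))).trace ≤
        ((A ⊗ₖ A - Z₂)ᵀ * (A ⊗ₖ A - Z₂)).trace) ∧
    (∀ Z₂ : Matrix (Fin N × Fin N) (Fin N × Fin N) ℝ, Z₂ᵀ * Z₂ = 1 →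
      ((A ⊗ₖ A - Z₂)ᵀ * (A ⊗ₖ A - Z₂)).trace =
        ((A ⊗ₖ A - (U * Vᵀ) ⊗ₖ (U * Vᵀ))ᵀ * (A ⊗ₖ A - (U * Vᵀ) ⊗ₖ (U * Vᵀ))).trace →
      Z₂ = (U * Vᵀ) ⊗ₖ (U * Vᵀ)) := by
  have hkron : (U * Vᵀ) ⊗ₖ (U * Vᵀ) = (U ⊗ₖ U) * (V ⊗ₖ V)ᵀ := by
    rw [← Matrix.kroneckerMap_transpose, ← Matrix.mul_kronecker_mul]
  have hU2 : (U ⊗ₖ U)ᵀ * (U ⊗ₖ U) = 1 := by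
    rw [← Matrix.kroneckerMap_transpose, ← Matrix.mul_kronecker_mul, hU,
      Matrix.one_kronecker_one]
  have hV2 : (V ⊗ₖ V)ᵀ * (V ⊗ₖ V) = 1 := by
    rw [← Matrix.kroneckerMap_transpose, ← Matrix.mul_kronecker_mul, hV,
      Matrix.one_kronecker_one]
  have hd2 : ∀ p : Fin N × Fin N, 0 < d p.1 * d p.2 := fun p => mul_pos (hd p.1) (hd p.2)
  have hSVD2 : A ⊗ₖ A = (U ⊗ₖ U) * Matrix.diagonal (fun p : Fin N × Fin N => d p.1 * d p.2)
      * (V ⊗ₖ V)ᵀ := by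
    rw [← Matrix.kroneckerMap_transpose, ← Matrix.diagonal_kronecker_diagonal,
      ← Matrix.mul_kronecker_mul, ← Matrix.mul_kronecker_mul, ← hSVD]
  obtain ⟨h1, h2⟩ := procrustes (A ⊗ₖ A) (U ⊗ₖ U) (V ⊗ₖ V)
    (fun p : Fin N × Fin N => d p.1 * d p.2) hU2 hV2 hd2 hSVD2
  refine ⟨hkron, fun Z₂ hZ₂ => ?_, fun Z₂ hZ₂ heq => ?_⟩
  · rw [hkron]; exact h1 Z₂ hZ₂
  · rw [hkron]; rw [hkron] at heq; exact h2 Z₂ hZ₂ heq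
end

section
/- Let P be an N×N matrix with nonnegative entries whose column sums all equal 1 (column-stochastic), and define the average final entropy ⟨H_fin⟩(P) = −(1/N) Σ_{μ,i} P_{μ,i} log₂(P_{μ,i} / Σ_j P_{μ,j}). Then for the Kronecker product P⊗P (an N²×N² column-stochastic matrix, with uniform prior 1/N²), one has ⟨H_fin⟩(P⊗P) = 2 ⟨H_fin⟩(P); consequently the per-signal average information gain log₂ N − ⟨H_fin⟩(P) of the individual measurement equals half the information gain 2 log₂ N − ⟨H_fin⟩(P⊗P) of the collective measurement, so collective von Neumann measurement gives no advantage. -/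
open Matrix
open scoped Kronecker

/-- Average final entropy `⟨H_fin⟩(P) = −(1/|m|) Σ_{μ,i} P_{μ,i} log₂(P_{μ,i}/Σ_j P_{μ,j})`
of a probability matrix `P` over an index type `m`, with uniform prior `1/|m|`
(the convention `0 · log 0 = 0` holds automatically since `Real.logb 2 0 = 0`). -/
noncomputable def avgFinalEntropy {m : Type*} [Fintype m] (P : Matrix m m ℝ) : ℝ :=
  -(1 / (Fintype.card m : ℝ)) * ∑ μ, ∑ i, P μ i * Real.logb 2 (P μ i / ∑ j, P μ j)

/-- For a column-stochastic `N×N` matrix `P` (nonnegative entries, all column sums 1),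
the average final entropy of the Kronecker product `P ⊗ P` (an `N²×N²`
column-stochastic matrix, with uniform prior `1/N²`) is twice that of `P`;
consequently the per-signal information gain `log₂ N − ⟨H_fin⟩(P)` of the individual
measurement equals half of the information gain `2 log₂ N − ⟨H_fin⟩(P⊗P)` of the
collective measurement, so collective von Neumann measurement gives no advantage. -/
theorem avgFinalEntropy_kronecker_eq_two_mul {N : ℕ}
    (P : Matrix (Fin N) (Fin N) ℝ)
    (hpos : ∀ μ i, 0 ≤ P μ i)
    (hcol : ∀ i, ∑ μ, P μ i = 1) :
    avgFinalEntropy (P ⊗ₖ P) = 2 * avgFinalEntropy P ∧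
    Real.logb 2 N - avgFinalEntropy P =
      (2 * Real.logb 2 N - avgFinalEntropy (P ⊗ₖ P)) / 2 := by
  set T : ℝ := ∑ μ, ∑ i, P μ i * Real.logb 2 (P μ i / ∑ j, P μ j) with hT
  -- total of all entries of P is N
  have htot : ∑ ν, ∑ j, P ν j = (N : ℝ) := by
    refine Finset.sum_comm.trans ?_
    simp [hcol]
  -- row sums of the Kronecker product
  have hrow : ∀ μ ν : Fin N, ∑ p : Fin N × Fin N, (P ⊗ₖ P) (μ, ν) p
      = (∑ k, P μ k) * (∑ k, P ν k) := by
    intro μ ν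
    rw [Fintype.sum_prod_type, Finset.sum_mul_sum]
    simp [kroneckerMap_apply]
  -- pointwise splitting of the summand
  have hpoint : ∀ μ ν i j : Fin N,
      (P ⊗ₖ P) (μ, ν) (i, j) *
        Real.logb 2 ((P ⊗ₖ P) (μ, ν) (i, j) / ∑ p : Fin N × Fin N, (P ⊗ₖ P) (μ, ν) p)
      = P ν j * (P μ i * Real.logb 2 (P μ i / ∑ k, P μ k))
        + P μ i * (P ν j * Real.logb 2 (P ν j / ∑ k, P ν k)) := by
    intro μ ν i j
    rw [hrow μ ν]
    simp only [kroneckerMap_apply]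
    rcases eq_or_lt_of_le (hpos μ i) with h1 | h1
    · rw [← h1]; ring
    rcases eq_or_lt_of_le (hpos ν j) with h2 | h2
    · rw [← h2]; ring
    have hSμ : 0 < ∑ k, P μ k :=
      lt_of_lt_of_le h1 (Finset.single_le_sum (fun k _ => hpos μ k) (Finset.mem_univ i))
    have hSν : 0 < ∑ k, P ν k :=
      lt_of_lt_of_le h2 (Finset.single_le_sum (fun k _ => hpos ν k) (Finset.mem_univ j))
    rw [← div_mul_div_comm, Real.logb_mul (div_pos h1 hSμ).ne' (div_pos h2 hSν).ne']
    ring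
  -- the big sum equals 2·N·T
  have hsum : ∑ μν : Fin N × Fin N, ∑ ij : Fin N × Fin N,
      (P ⊗ₖ P) μν ij * Real.logb 2 ((P ⊗ₖ P) μν ij / ∑ p, (P ⊗ₖ P) μν p)
      = 2 * N * T := by
    have inner : ∀ μ ν : Fin N, ∑ ij : Fin N × Fin N,
        (P ⊗ₖ P) (μ, ν) ij * Real.logb 2 ((P ⊗ₖ P) (μ, ν) ij / ∑ p, (P ⊗ₖ P) (μ, ν) p)
        = (∑ j, P ν j) * (∑ i, P μ i * Real.logb 2 (P μ i / ∑ k, P μ k))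
          + (∑ i, P μ i) * (∑ j, P ν j * Real.logb 2 (P ν j / ∑ k, P ν k)) := by
      intro μ ν
      rw [Fintype.sum_prod_type]
      simp only [hpoint, Finset.sum_add_distrib, ← Finset.sum_mul, ← Finset.mul_sum]
    rw [Fintype.sum_prod_type]
    simp only [inner, Finset.sum_add_distrib, ← Finset.sum_mul, ← Finset.mul_sum]
    rw [htot, ← hT]
    ring
  have card2 : (Fintype.card (Fin N × Fin N) : ℝ) = (N : ℝ) * N := by
    simp [Fintype.card_prod]
  have key : avgFinalEntropy (P ⊗ₖ P) = 2 * avgFinalEntropy P := by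
    unfold avgFinalEntropy
    rw [hsum, card2, ← hT]
    simp only [Fintype.card_fin]
    rcases Nat.eq_zero_or_pos N with h | h
    · subst h
      simp [hT]
    · have hN : (N : ℝ) ≠ 0 := Nat.cast_ne_zero.mpr h.ne'
      field_simp
  refine ⟨key, ?_⟩
  rw [key]; ring
end

section
/- Let A be a real invertible N×N matrix with smallest singular value σ_min > 0, let Ã = (A⁻¹)ᵀ be the matrix of reciprocal states, and for p ∈ [0,1) define the unambiguous-discrimination POVM elements Π_i = (1−p) |Ψ̃_i⟩⟨Ψ̃_i| where |Ψ̃_i⟩ is the i-th column of Ã. Then Σ_{i=1}^N Π_i = (1−p) Ã Ãᵀ ≤ 1 (in the positive semidefinite Loewner order) if and only if 1−p ≤ σ_min²; hence the maximal probability of a conclusive result for this POVM with equal conclusive probabilities is 1−p_inc = σ_min², the square of the smallest singular value of A. -/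
open Matrix

/-- For a real invertible `N×N` matrix `A` with SVD `A = U Σ Vᵀ` (`Σ = diagonal d`,
`d i > 0`, so the smallest singular value of `A` is `σ_min = ⨅ i, d i`), reciprocal
state matrix `Ã = (A⁻¹)ᵀ`, and `p ∈ [0,1)`, the unambiguous-discrimination POVM
elements `Π_i = (1−p)|Ψ̃_i⟩⟨Ψ̃_i|` (with `|Ψ̃_i⟩` the `i`-th column of `Ã`) satisfy
`Σ_i Π_i = (1−p) Ã Ãᵀ`, and `(1−p) Ã Ãᵀ ≤ 1` in the Loewner order if and only if
`1−p ≤ σ_min²`; hence the maximal conclusive probability of the POVM with equal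
conclusive probabilities is `σ_min²`. -/
theorem usd_povm_valid_iff_le_min_singular_sq {N : ℕ} (hN : 0 < N)
    (A U V : Matrix (Fin N) (Fin N) ℝ) (d : Fin N → ℝ)
    (hA : IsUnit A.det)
    (hcols : ∀ i, ∑ j, (A j i) ^ 2 = 1)
    (hU : Uᵀ * U = 1) (hV : Vᵀ * V = 1)
    (hd : ∀ i, 0 < d i)
    (hSVD : A = U * Matrix.diagonal d * Vᵀ)
    (p : ℝ) (hp : p ∈ Set.Ico (0 : ℝ) 1) :
    (∑ i, (1 - p) • (Matrix.of fun a b => (A⁻¹)ᵀ a i * (A⁻¹)ᵀ b i) =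
      (1 - p) • ((A⁻¹)ᵀ * ((A⁻¹)ᵀ)ᵀ)) ∧
    (((1 : Matrix (Fin N) (Fin N) ℝ) - (1 - p) • ((A⁻¹)ᵀ * ((A⁻¹)ᵀ)ᵀ)).PosSemidef ↔
      1 - p ≤ (⨅ i, d i) ^ 2) := by
  have hNe : Nonempty (Fin N) := ⟨⟨0, hN⟩⟩
  set c : ℝ := 1 - p with hc
  constructor
  · ext a b
    simp only [Matrix.sum_apply, Matrix.smul_apply, Matrix.of_apply, Matrix.mul_apply,
      Matrix.transpose_apply, smul_eq_mul, Finset.mul_sum]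
  · have hUU : U * Uᵀ = 1 := mul_eq_one_comm.mp hU
    have hDD : Matrix.diagonal d * Matrix.diagonal (fun i => (d i)⁻¹) = 1 := by
      rw [Matrix.diagonal_mul_diagonal]
      rw [show (fun i => d i * (d i)⁻¹) = fun _ => (1:ℝ) from
        funext fun i => mul_inv_cancel₀ (hd i).ne', Matrix.diagonal_one]
    have hAinv : A⁻¹ = V * Matrix.diagonal (fun i => (d i)⁻¹) * Uᵀ := by
      apply Matrix.inv_eq_right_inv
      rw [hSVD]
      calc U * Matrix.diagonal d * Vᵀ * (V * Matrix.diagonal (fun i => (d i)⁻¹) * Uᵀ)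
          = U * (Matrix.diagonal d * (Vᵀ * V) * Matrix.diagonal (fun i => (d i)⁻¹)) * Uᵀ := by
            noncomm_ring
        _ = U * (Matrix.diagonal d * Matrix.diagonal (fun i => (d i)⁻¹)) * Uᵀ := by
            rw [hV, Matrix.mul_one]
        _ = 1 := by rw [hDD, Matrix.mul_one, hUU]
    have hkey : (A⁻¹)ᵀ * ((A⁻¹)ᵀ)ᵀ = U * Matrix.diagonal (fun i => ((d i)⁻¹)^2) * Uᵀ := by
      rw [Matrix.transpose_transpose, hAinv]
      rw [Matrix.transpose_mul, Matrix.transpose_mul, Matrix.transpose_transpose,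
        Matrix.diagonal_transpose]
      calc Uᵀᵀ * (Matrix.diagonal (fun i => (d i)⁻¹) * Vᵀ) *
            (V * Matrix.diagonal (fun i => (d i)⁻¹) * Uᵀ)
          = U * (Matrix.diagonal (fun i => (d i)⁻¹) * (Vᵀ * V) *
              Matrix.diagonal (fun i => (d i)⁻¹)) * Uᵀ := by
            rw [Matrix.transpose_transpose]; noncomm_ring
        _ = U * Matrix.diagonal (fun i => ((d i)⁻¹)^2) * Uᵀ := by
            rw [hV, Matrix.mul_one, Matrix.diagonal_mul_diagonal]
            congr 2
            exact congrArg Matrix.diagonal (funext fun i => (sq ((d i)⁻¹)).symm)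

    have hM : (1 : Matrix (Fin N) (Fin N) ℝ) - c • ((A⁻¹)ᵀ * ((A⁻¹)ᵀ)ᵀ) =
        U * Matrix.diagonal (fun i => 1 - c * ((d i)⁻¹)^2) * Uᵀ := by
      rw [hkey]
      have hds : Matrix.diagonal (fun i => 1 - c * ((d i)⁻¹)^2) =
          1 - c • Matrix.diagonal (fun i => ((d i)⁻¹)^2) := by
        rw [← Matrix.diagonal_one, ← Matrix.diagonal_smul, ← Matrix.diagonal_sub]
        rfl
      rw [hds, Matrix.mul_sub, Matrix.sub_mul, Matrix.mul_one, hUU,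
        Matrix.mul_smul, Matrix.smul_mul]
    have hdiag : ∀ i, (0 ≤ 1 - c * ((d i)⁻¹)^2 ↔ c ≤ (d i)^2) := by
      intro i
      have hd2 : (0:ℝ) < (d i)^2 := pow_pos (hd i) 2
      rw [inv_pow, sub_nonneg, ← div_eq_mul_inv, div_le_one hd2]
    obtain ⟨i₀, hi₀⟩ := Finite.exists_min d
    have hinf : (⨅ i, d i) = d i₀ :=
      le_antisymm (ciInf_le (Finite.bddBelow_range d) i₀) (le_ciInf hi₀)
    constructor
    · intro hpsd
      rw [hM] at hpsd
      have h2 := hpsd.conjTranspose_mul_mul_same U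
      rw [Matrix.conjTranspose_eq_transpose_of_trivial] at h2
      have h3 : Uᵀ * (U * Matrix.diagonal (fun i => 1 - c * ((d i)⁻¹)^2) * Uᵀ) * U =
          Matrix.diagonal (fun i => 1 - c * ((d i)⁻¹)^2) := by
        calc Uᵀ * (U * Matrix.diagonal (fun i => 1 - c * ((d i)⁻¹)^2) * Uᵀ) * U
            = (Uᵀ * U) * Matrix.diagonal (fun i => 1 - c * ((d i)⁻¹)^2) * (Uᵀ * U) := by
              noncomm_ring
          _ = _ := by rw [hU, Matrix.one_mul, Matrix.mul_one]
      rw [h3] at h2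
      have h4 := Matrix.posSemidef_diagonal_iff.mp h2
      rw [hinf]
      exact (hdiag i₀).mp (h4 i₀)
    · intro hle
      have h4 : ∀ i, 0 ≤ 1 - c * ((d i)⁻¹)^2 := by
        intro i
        rw [hdiag i]
        refine hle.trans ?_
        rw [hinf]
        exact pow_le_pow_left₀ (hd i₀).le (hi₀ i) 2
      have h2 : (Matrix.diagonal (fun i => 1 - c * ((d i)⁻¹)^2)).PosSemidef :=
        Matrix.posSemidef_diagonal_iff.mpr h4
      have h3 := h2.mul_mul_conjTranspose_same U
      rw [Matrix.conjTranspose_eq_transpose_of_trivial] at h3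
      rw [hM]
      exact h3
end

section
/- For every θ ∈ (0, π/2], the average information gain of the optimal von Neumann measurement on two equiprobable signal states separated by angle θ is at least that of the optimal unambiguous-discrimination POVM: 1 + ((1 + sin θ)/2) log₂((1 + sin θ)/2) + ((1 − sin θ)/2) log₂((1 − sin θ)/2) ≥ 2 sin²(θ/2), with equality if and only if θ = π/2. -/
open Real

set_option maxHeartbeats 1000000

/-- For `t ≥ 1`, `2 log t ≤ t - t⁻¹`. -/
lemma two_log_le (t : ℝ) (ht : 1 ≤ t) : 2 * Real.log t ≤ t - t⁻¹ := by
  have hmono : MonotoneOn (fun x : ℝ => x - x⁻¹ - 2 * Real.log x) (Set.Ici 1) := by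
    have hco : ContinuousOn (fun x : ℝ => x - x⁻¹ - 2 * Real.log x) (Set.Ici 1) := by
      apply ContinuousOn.sub
      · exact continuousOn_id.sub (continuousOn_id.inv₀ (fun x hx => by
          have : (1:ℝ) ≤ x := hx; positivity))
      · exact (continuousOn_const.mul (Real.continuousOn_log.mono (fun x hx => by
          have : (1:ℝ) ≤ x := hx; simp; positivity)))
    have hderiv : ∀ x ∈ interior (Set.Ici (1:ℝ)),
        HasDerivAt (fun x : ℝ => x - x⁻¹ - 2 * Real.log x) (1 - (-(x^2)⁻¹) - 2 * x⁻¹) x := by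
      intro x hx
      rw [interior_Ici] at hx
      have hx0 : x ≠ 0 := by have : (1:ℝ) < x := hx; positivity
      exact ((hasDerivAt_id x).sub (hasDerivAt_inv hx0)).sub
        ((Real.hasDerivAt_log hx0).const_mul 2)
    apply monotoneOn_of_deriv_nonneg (convex_Ici 1) hco
    · intro x hx; exact (hderiv x hx).differentiableAt.differentiableWithinAt
    · intro x hx
      rw [(hderiv x hx).deriv]
      rw [interior_Ici] at hx
      have hx1 : (1:ℝ) < x := hx
      have hx0 : (0:ℝ) < x := by linarith
      have h1 : (x^2)⁻¹ = 1/x^2 := by ring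
      have h2 : x⁻¹ = 1/x := by ring
      rw [h1, h2, show 1 - -(1/x^2) - 2*(1/x) = (x-1)^2/x^2 from by field_simp; ring]
      positivity
  have h := hmono (Set.self_mem_Ici) (show t ∈ Set.Ici (1:ℝ) from ht) ht
  simp only [Real.log_one, inv_one] at h
  linarith

/-- `artanh` bound: for `0 ≤ u < 1`, `2u ≤ log(1+u) - log(1-u)`. -/
lemma two_mul_le_log_div (u : ℝ) (h0 : 0 ≤ u) (h1 : u < 1) :
    2 * u ≤ Real.log (1 + u) - Real.log (1 - u) := by
  have hmono : MonotoneOn (fun x : ℝ => Real.log (1 + x) - Real.log (1 - x) - 2 * x)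
      (Set.Ico 0 1) := by
    have hd : ∀ x ∈ interior (Set.Ico (0:ℝ) 1),
        HasDerivAt (fun x : ℝ => Real.log (1 + x) - Real.log (1 - x) - 2 * x)
          (1 / (1 + x) - (-1) / (1 - x) - 2) x := by
      intro x hx
      rw [interior_Ico] at hx
      obtain ⟨hx0, hx1⟩ := hx
      have hp : (1:ℝ) + x ≠ 0 := by linarith
      have hm : (1:ℝ) - x ≠ 0 := by linarith
      have d1 : HasDerivAt (fun x : ℝ => Real.log (1 + x)) (1 / (1 + x)) x := by
        simpa using ((hasDerivAt_const x (1:ℝ)).add (hasDerivAt_id x)).log hp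
      have d2 : HasDerivAt (fun x : ℝ => Real.log (1 - x)) ((-1) / (1 - x)) x := by
        simpa using ((hasDerivAt_const x (1:ℝ)).sub (hasDerivAt_id x)).log hm
      have := (d1.sub d2).sub ((hasDerivAt_id x).const_mul 2)
      rw [mul_one] at this
      exact this
    apply monotoneOn_of_deriv_nonneg (convex_Ico 0 1)
    · apply ContinuousOn.sub
      apply ContinuousOn.sub
      · apply Real.continuousOn_log.comp (by fun_prop)
        intro x hx; obtain ⟨h0, h1⟩ := hx; simp; intro h; linarith
      · apply Real.continuousOn_log.comp (by fun_prop)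
        intro x hx; obtain ⟨h0, h1'⟩ := hx; simp; intro h; linarith
      · fun_prop
    · intro x hx; exact (hd x hx).differentiableAt.differentiableWithinAt
    · intro x hx
      rw [(hd x hx).deriv]
      rw [interior_Ico] at hx
      obtain ⟨hx0, hx1⟩ := hx
      have hp : (0:ℝ) < 1 + x := by linarith
      have hm : (0:ℝ) < 1 - x := by linarith
      rw [show 1 / (1 + x) - (-1) / (1 - x) - 2 = 2*x^2 / ((1+x)*(1-x)) from by
        field_simp; ring]
      positivity
  have h := hmono (show (0:ℝ) ∈ Set.Ico (0:ℝ) 1 by constructor <;> norm_num)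
    (show u ∈ Set.Ico (0:ℝ) 1 from ⟨h0, h1⟩) h0
  simp only [add_zero, sub_zero, Real.log_one, mul_zero] at h
  linarith

/-- Pinsker-type: for `0 ≤ s < 1`, `s² ≤ (1+s)log(1+s) + (1-s)log(1-s)`. -/
lemma pinsker (s : ℝ) (h0 : 0 ≤ s) (h1 : s < 1) :
    s ^ 2 ≤ (1 + s) * Real.log (1 + s) + (1 - s) * Real.log (1 - s) := by
  have hmono : MonotoneOn
      (fun x : ℝ => (1 + x) * Real.log (1 + x) + (1 - x) * Real.log (1 - x) - x ^ 2)
      (Set.Ico 0 1) := by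
    have hd : ∀ x ∈ interior (Set.Ico (0:ℝ) 1),
        HasDerivAt (fun x : ℝ => (1 + x) * Real.log (1 + x) + (1 - x) * Real.log (1 - x) - x ^ 2)
          ((Real.log (1 + x) + 1) + (-Real.log (1 - x) - 1) - 2 * x) x := by
      intro x hx
      rw [interior_Ico] at hx
      obtain ⟨hx0, hx1⟩ := hx
      have hp : (1:ℝ) + x ≠ 0 := by linarith
      have hm : (1:ℝ) - x ≠ 0 := by linarith
      have ha : HasDerivAt (fun x : ℝ => 1 + x) 1 x := by
        exact (hasDerivAt_id x).const_add 1
      have hb : HasDerivAt (fun x : ℝ => 1 - x) (-1) x := by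
        exact (hasDerivAt_id x).const_sub 1
      have d1 : HasDerivAt (fun x : ℝ => (1 + x) * Real.log (1 + x))
          (1 * Real.log (1 + x) + (1 + x) * (1 / (1 + x))) x := ha.mul (ha.log hp)
      have d2 : HasDerivAt (fun x : ℝ => (1 - x) * Real.log (1 - x))
          ((-1) * Real.log (1 - x) + (1 - x) * ((-1) / (1 - x))) x := hb.mul (hb.log hm)
      have d3 : HasDerivAt (fun x : ℝ => x ^ 2) (2 * x) x := by
        simpa using hasDerivAt_pow 2 x
      have := (d1.add d2).sub d3
      exact this.congr_deriv (by field_simp; ring)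
    apply monotoneOn_of_deriv_nonneg (convex_Ico 0 1)
    · apply ContinuousOn.sub
      apply ContinuousOn.add
      · apply ContinuousOn.mul (by fun_prop)
        apply Real.continuousOn_log.comp (by fun_prop)
        intro x hx; obtain ⟨ha, hb⟩ := hx; simp; intro h; linarith
      · apply ContinuousOn.mul (by fun_prop)
        apply Real.continuousOn_log.comp (by fun_prop)
        intro x hx; obtain ⟨ha, hb⟩ := hx; simp; intro h; linarith
      · fun_prop
    · intro x hx; exact (hd x hx).differentiableAt.differentiableWithinAt
    · intro x hx
      rw [(hd x hx).deriv]
      rw [interior_Ico] at hx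
      obtain ⟨hx0, hx1⟩ := hx
      have harc := two_mul_le_log_div x (le_of_lt hx0) hx1
      linarith
  have h := hmono (show (0:ℝ) ∈ Set.Ico (0:ℝ) 1 by constructor <;> norm_num)
    (show s ∈ Set.Ico (0:ℝ) 1 from ⟨h0, h1⟩) h0
  simp only [add_zero, sub_zero, Real.log_one] at h
  norm_num at h
  linarith

/-- Key strict inequality for `0 < s < 1`. -/
lemma key_strict (s c : ℝ) (hs0 : 0 < s) (hs1 : s < 1) (hc0 : 0 ≤ c)
    (hpy : c ^ 2 = 1 - s ^ 2) :
    1 - c < 1 + ((1 + s) / 2) * Real.logb 2 ((1 + s) / 2) +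
      ((1 - s) / 2) * Real.logb 2 ((1 - s) / 2) := by
  have hc1 : c < 1 := by nlinarith
  have hcpos : 0 < c := by nlinarith
  have hL2 : (0:ℝ) < Real.log 2 := Real.log_pos (by norm_num)
  have hp : (0:ℝ) < (1 + s) / 2 := by linarith
  have hq : (0:ℝ) < (1 - s) / 2 := by linarith
  -- rewrite logb in terms of log
  rw [Real.logb, Real.logb]
  have hlogp : Real.log ((1 + s) / 2) = Real.log (1 + s) - Real.log 2 :=
    Real.log_div (by linarith) (by norm_num)
  have hlogq : Real.log ((1 - s) / 2) = Real.log (1 - s) - Real.log 2 :=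
    Real.log_div (by linarith) (by norm_num)
  rw [hlogp, hlogq]
  -- it suffices to show `2 (1 - c) log 2 < A` where A is the symmetric entropy expr
  set A := (1 + s) * Real.log (1 + s) + (1 - s) * Real.log (1 - s) with hA
  have hgoal : 2 * (1 - c) * Real.log 2 < A →
      1 - c < 1 + ((1 + s) / 2) * ((Real.log (1 + s) - Real.log 2) / Real.log 2) +
        ((1 - s) / 2) * ((Real.log (1 - s) - Real.log 2) / Real.log 2) := by
    intro h
    rw [← sub_pos]
    have hexp : 1 + ((1 + s) / 2) * ((Real.log (1 + s) - Real.log 2) / Real.log 2) +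
        ((1 - s) / 2) * ((Real.log (1 - s) - Real.log 2) / Real.log 2) - (1 - c)
        = (A - 2 * (1 - c) * Real.log 2) / (2 * Real.log 2) := by
      field_simp
      ring
    rw [hexp]
    apply div_pos (by linarith) (by linarith)
  apply hgoal
  rcases le_or_gt (1/2 : ℝ) c with hcase | hcase
  · -- Pinsker case : c ≥ 1/2
    have hpin := pinsker s (le_of_lt hs0) hs1
    have hs2 : s ^ 2 = (1 - c) * (1 + c) := by nlinarith
    have h2l2 : 2 * Real.log 2 < 1 + c := by
      have := Real.log_two_lt_d9
      linarith
    have h1c : 0 < 1 - c := by linarith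
    calc 2 * (1 - c) * Real.log 2 < (1 - c) * (1 + c) := by nlinarith
    _ = s ^ 2 := hs2.symm
    _ ≤ A := hpin
  · -- sqrt bound case : c < 1/2
    set p := (1 + s) / 2 with hpdef
    set q := (1 - s) / 2 with hqdef
    set a := Real.sqrt p with hadef
    set b := Real.sqrt q with hbdef
    have ha0 : 0 < a := Real.sqrt_pos.mpr hp
    have hb0 : 0 < b := Real.sqrt_pos.mpr hq
    have ha2 : a ^ 2 = p := Real.sq_sqrt (le_of_lt hp)
    have hb2 : b ^ 2 = q := Real.sq_sqrt (le_of_lt hq)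
    have ha1 : a ≤ 1 := by
      rw [show (1:ℝ) = Real.sqrt 1 by simp [Real.sqrt_one]]
      exact Real.sqrt_le_sqrt (by simp [hpdef]; linarith)
    have hb1 : b ≤ 1 := by
      rw [show (1:ℝ) = Real.sqrt 1 by simp [Real.sqrt_one]]
      exact Real.sqrt_le_sqrt (by simp [hqdef]; linarith)
    -- c = 2ab
    have hc2ab : c = 2 * a * b := by
      have h1 : c ^ 2 = (2 * a * b) ^ 2 := by
        rw [hpy]
        have he : (2*a*b)^2 = 4 * a^2 * b^2 := by ring
        rw [he, ha2, hb2, hpdef, hqdef]; ring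
      have h2 : (0:ℝ) ≤ 2 * a * b := by positivity
      calc c = Real.sqrt (c ^ 2) := (Real.sqrt_sq hc0).symm
      _ = Real.sqrt ((2*a*b) ^ 2) := by rw [h1]
      _ = 2 * a * b := Real.sqrt_sq h2
    -- -log p ≤ a⁻¹ - a
    have hlp : -Real.log p ≤ a⁻¹ - a := by
      have := two_log_le a⁻¹ (by rw [le_inv_comm₀ (by norm_num) ha0] at *; simpa using ha1)
      have hlog : Real.log a⁻¹ = - Real.log a := Real.log_inv a
      have hlpa : Real.log p = 2 * Real.log a := by
        rw [← ha2, Real.log_pow]; push_cast; ring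
      rw [hlog] at this
      rw [hlpa]
      rw [inv_inv] at this
      linarith
    have hlq : -Real.log q ≤ b⁻¹ - b := by
      have := two_log_le b⁻¹ (by rw [le_inv_comm₀ (by norm_num) hb0] at *; simpa using hb1)
      have hlog : Real.log b⁻¹ = - Real.log b := Real.log_inv b
      have hlqb : Real.log q = 2 * Real.log b := by
        rw [← hb2, Real.log_pow]; push_cast; ring
      rw [hlog] at this
      rw [inv_inv] at this
      rw [hlqb]
      linarith
    -- A = (2p) log(1+s) + (2q) log(1-s); log(1+s) = log p + log 2, log(1-s) = log q + log 2
    have hArw : A = 2 * (p * Real.log p + q * Real.log q) + 2 * Real.log 2 := by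
      have h1s : (1:ℝ) + s = 2 * p := by rw [hpdef]; ring
      have h1s' : (1:ℝ) - s = 2 * q := by rw [hqdef]; ring
      rw [hA, h1s, h1s', Real.log_mul (by norm_num) (ne_of_gt hp),
        Real.log_mul (by norm_num) (ne_of_gt hq)]
      have hpq1 : p + q = 1 := by rw [hpdef, hqdef]; ring
      linear_combination (2 * Real.log 2) * hpq1
    -- bound: -(p log p + q log q) ≤ ab(a+b)
    have hbound : -(p * Real.log p + q * Real.log q) ≤ a * b * (a + b) := by
      have h1 : -(p * Real.log p) ≤ p * (a⁻¹ - a) :=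
        by nlinarith [mul_le_mul_of_nonneg_left hlp (le_of_lt hp)]
      have h2 : -(q * Real.log q) ≤ q * (b⁻¹ - b) :=
        by nlinarith [mul_le_mul_of_nonneg_left hlq (le_of_lt hq)]
      have hq' : b ^ 2 = 1 - a ^ 2 := by rw [ha2, hb2, hpdef, hqdef]; ring
      have ha' : a ^ 2 * a⁻¹ = a := by rw [pow_two, mul_assoc, mul_inv_cancel₀ (ne_of_gt ha0), mul_one]
      have hb' : b ^ 2 * b⁻¹ = b := by rw [pow_two, mul_assoc, mul_inv_cancel₀ (ne_of_gt hb0), mul_one]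
      have e1 : p * (a⁻¹ - a) = a * b ^ 2 := by
        rw [← ha2, hq']
        calc a ^ 2 * (a⁻¹ - a) = a ^ 2 * a⁻¹ - a ^ 2 * a := by ring
        _ = a - a ^ 3 := by rw [ha']; ring
        _ = a * (1 - a ^ 2) := by ring
      have e2 : q * (b⁻¹ - b) = b * a ^ 2 := by
        have hp' : a ^ 2 = 1 - b ^ 2 := by rw [ha2, hb2, hpdef, hqdef]; ring
        rw [← hb2, hp']
        calc b ^ 2 * (b⁻¹ - b) = b ^ 2 * b⁻¹ - b ^ 2 * b := by ring
        _ = b - b ^ 3 := by rw [hb']; ring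
        _ = b * (1 - b ^ 2) := by ring
      rw [e1] at h1; rw [e2] at h2
      nlinarith
    -- a + b < 2 log 2
    have hab : a + b < 2 * Real.log 2 := by
      have hsq : (a + b) ^ 2 = 1 + c := by
        rw [hc2ab]; nlinarith [ha2, hb2, show p + q = 1 by rw [hpdef, hqdef]; ring]
      have h1 : (a + b) ^ 2 < 3 / 2 := by rw [hsq]; linarith
      have hl2 := Real.log_two_gt_d9
      nlinarith [add_pos ha0 hb0]
    -- conclude
    have hfin : 2 * (1 - c) * Real.log 2 = 2 * Real.log 2 - c * 2 * Real.log 2 := by ring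
    rw [hfin, hArw]
    have hlast : a * b * (a + b) < a * b * (2 * Real.log 2) := by
      have habpos : (0:ℝ) < a * b := mul_pos ha0 hb0
      exact (mul_lt_mul_iff_right₀ habpos).mpr hab
    have hcl : c * Real.log 2 = a * b * (2 * Real.log 2) := by rw [hc2ab]; ring
    nlinarith [hbound, hlast, hcl]

/-- For every `θ ∈ (0, π/2]`, the average information gain of the optimal von Neumann
measurement on two equiprobable signal states separated by angle `θ`, namely
`1 + ((1+sin θ)/2) log₂((1+sin θ)/2) + ((1−sin θ)/2) log₂((1−sin θ)/2)`, is at least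
that of the optimal unambiguous-discrimination POVM, `2 sin²(θ/2)`, with equality if
and only if `θ = π/2` (the convention `0 · log 0 = 0` holds automatically since
`Real.logb 2 0 = 0`). -/
theorem vonNeumann_gain_ge_povm_gain (θ : ℝ) (hθ : θ ∈ Set.Ioc 0 (Real.pi / 2)) :
    2 * Real.sin (θ / 2) ^ 2 ≤
      1 + ((1 + Real.sin θ) / 2) * Real.logb 2 ((1 + Real.sin θ) / 2) +
        ((1 - Real.sin θ) / 2) * Real.logb 2 ((1 - Real.sin θ) / 2) ∧
    (1 + ((1 + Real.sin θ) / 2) * Real.logb 2 ((1 + Real.sin θ) / 2) +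
        ((1 - Real.sin θ) / 2) * Real.logb 2 ((1 - Real.sin θ) / 2) =
        2 * Real.sin (θ / 2) ^ 2 ↔ θ = Real.pi / 2) := by
  obtain ⟨hθ0, hθ2⟩ := hθ
  have hpi := Real.pi_pos
  -- equality at θ = π/2
  have heq : θ = Real.pi / 2 →
      1 + ((1 + Real.sin θ) / 2) * Real.logb 2 ((1 + Real.sin θ) / 2) +
        ((1 - Real.sin θ) / 2) * Real.logb 2 ((1 - Real.sin θ) / 2) =
        2 * Real.sin (θ / 2) ^ 2 := by
    intro h
    subst h
    rw [Real.sin_pi_div_two]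
    have h4 : Real.pi / 2 / 2 = Real.pi / 4 := by ring
    rw [h4, Real.sin_pi_div_four]
    norm_num
    rw [div_pow, Real.sq_sqrt (by norm_num : (0:ℝ) ≤ 2)]
    norm_num
  rcases eq_or_lt_of_le hθ2 with hcase | hcase
  · constructor
    · exact (heq hcase).ge
    · exact ⟨fun _ => hcase, fun _ => heq hcase⟩
  · -- θ < π/2 : strict inequality
    have hs0 : 0 < Real.sin θ := Real.sin_pos_of_pos_of_lt_pi hθ0 (by linarith)
    have hs1 : Real.sin θ < 1 := by
      have := Real.sin_lt_sin_of_lt_of_le_pi_div_two (by linarith : -(Real.pi/2) ≤ θ)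
        (le_refl (Real.pi/2)) hcase
      rwa [Real.sin_pi_div_two] at this
    have hc0 : 0 ≤ Real.cos θ := Real.cos_nonneg_of_mem_Icc ⟨by linarith, by linarith⟩
    have hpy : Real.cos θ ^ 2 = 1 - Real.sin θ ^ 2 := by
      nlinarith [Real.sin_sq_add_cos_sq θ]
    have hhalf : 2 * Real.sin (θ / 2) ^ 2 = 1 - Real.cos θ := by
      have h2 : Real.cos θ = Real.cos (2 * (θ / 2)) := by congr 1; ring
      rw [h2, Real.cos_two_mul']
      nlinarith [Real.sin_sq_add_cos_sq (θ / 2)]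
    have hkey := key_strict (Real.sin θ) (Real.cos θ) hs0 hs1 hc0 hpy
    rw [← hhalf] at hkey
    constructor
    · linarith
    · constructor
      · intro h; linarith
      · intro h; exact absurd h (by intro h'; linarith [hcase.ne h'])
end
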